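/- arXiv:1304.7466 — 3 statements merged into one kernel-verified Lean document; each statement's English description precedes it below -/
import Mathlib

section
/- Fix n ∈ ℕ ∪ {∞}. The n-covers define a pretopology on the category of small categories: (i) for every small category 𝒰 the singleton family {1_𝒰} is an n-cover; (ii) if (φ_i : 𝒱_i → 𝒰)_{i∈I} is an n-cover and ψ : 𝒲 → 𝒰 is any functor, then the family of pullback projections (𝒲 ×_𝒰 𝒱_i → 𝒲)_{i∈I} is an n-cover of 𝒲; (iii) if (φ_i : 𝒱_i → 𝒰)_{i∈I} is an n-cover and for every i the family (φ_{ij} : 𝒱_{ij} → 𝒱_i)_{j∈J_i} is an n-cover of 𝒱_i, then the family of composites (φ_i ∘ φ_{ij})_{i∈I, j∈J_i} is an n-cover of 𝒰. -/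
open CategoryTheory

universe u

/-- `𝒩ₙ(𝒰)`: the set of `n`-simplices of the simplicial nerve of a small category. -/
abbrev NerveSimplices (𝒰 : Type u) [SmallCategory 𝒰] (n : ℕ) : Type u :=
  ComposableArrows 𝒰 n

/-- The map induced by a functor on `n`-simplices of the nerves. -/
def nerveMap {𝒱 𝒰 : Type u} [SmallCategory 𝒱] [SmallCategory 𝒰] (φ : 𝒱 ⥤ 𝒰) {n : ℕ}
    (σ : NerveSimplices 𝒱 n) : NerveSimplices 𝒰 n :=
  σ ⋙ φ

/-- A family of functors `(φᵢ : 𝒱ᵢ ⥤ 𝒰)` is an `n`-cover (`n ∈ ℕ ∪ {∞}`) if for every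
natural number `k ≤ n` the induced maps on `k`-simplices of the nerves are jointly
surjective. -/
def IsNCover (n : ℕ∞) {ι : Type u} {𝒰 : Type u} [SmallCategory 𝒰] (𝒱 : ι → Type u)
    [∀ i, SmallCategory (𝒱 i)] (φ : ∀ i, 𝒱 i ⥤ 𝒰) : Prop :=
  ∀ k : ℕ, (k : ℕ∞) ≤ n → ∀ σ : NerveSimplices 𝒰 k,
    ∃ i, ∃ τ : NerveSimplices (𝒱 i) k, nerveMap (φ i) τ = σ

variable {𝒰 𝒱₁ 𝒱₂ : Type u} [SmallCategory 𝒰] [SmallCategory 𝒱₁] [SmallCategory 𝒱₂]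

/-- The pullback `𝒱₁ ×_𝒰 𝒱₂` of two functors in the category of small categories:
objects are pairs of objects with equal images in `𝒰`, morphisms are pairs of morphisms
with equal images in `𝒰`. -/
structure CatPB (φ₁ : 𝒱₁ ⥤ 𝒰) (φ₂ : 𝒱₂ ⥤ 𝒰) : Type u where
  left : 𝒱₁
  right : 𝒱₂
  eq : φ₁.obj left = φ₂.obj right

instance (φ₁ : 𝒱₁ ⥤ 𝒰) (φ₂ : 𝒱₂ ⥤ 𝒰) : Category (CatPB φ₁ φ₂) where
  Hom A B := { fg : (A.left ⟶ B.left) × (A.right ⟶ B.right) //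
    φ₁.map fg.1 = eqToHom A.eq ≫ φ₂.map fg.2 ≫ eqToHom B.eq.symm }
  id A := ⟨(𝟙 _, 𝟙 _), by simp⟩
  comp {A B C} f g := ⟨(f.1.1 ≫ g.1.1, f.1.2 ≫ g.1.2), by
    rw [Functor.map_comp, Functor.map_comp, f.2, g.2]; simp⟩
  id_comp f := by apply Subtype.ext; simp
  comp_id f := by apply Subtype.ext; simp
  assoc f g h := by apply Subtype.ext; simp

/-- The first projection of the pullback of categories. -/
def pbFst (φ₁ : 𝒱₁ ⥤ 𝒰) (φ₂ : 𝒱₂ ⥤ 𝒰) : CatPB φ₁ φ₂ ⥤ 𝒱₁ where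
  obj A := A.left
  map f := f.1.1

/-! A `k`-simplex is a functor out of `Fin (k + 1)`, and a functor into `CatPB φ₁ φ₂` is a pair
of functors agreeing in `𝒰` (`CatPB.lift`). So a simplex of `𝒲` together with a lift of its image
along some `φ i` is a simplex of the pullback; for identities and composites, lifts simply compose. -/

namespace CatPB

variable {C : Type*} [Category C] (φ₁ : 𝒱₁ ⥤ 𝒰) (φ₂ : 𝒱₂ ⥤ 𝒰)

def lift (F₁ : C ⥤ 𝒱₁) (F₂ : C ⥤ 𝒱₂) (h : F₁ ⋙ φ₁ = F₂ ⋙ φ₂) : C ⥤ CatPB φ₁ φ₂ where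
  obj c := ⟨F₁.obj c, F₂.obj c, Functor.congr_obj h c⟩
  map f := ⟨(F₁.map f, F₂.map f), by simpa using Functor.congr_hom h f⟩
  map_id c := Subtype.ext (Prod.ext (F₁.map_id c) (F₂.map_id c))
  map_comp f g := Subtype.ext (Prod.ext (F₁.map_comp f g) (F₂.map_comp f g))

theorem lift_comp_pbFst (F₁ : C ⥤ 𝒱₁) (F₂ : C ⥤ 𝒱₂) (h : F₁ ⋙ φ₁ = F₂ ⋙ φ₂) :
    lift φ₁ φ₂ F₁ F₂ h ⋙ pbFst φ₁ φ₂ = F₁ :=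
  rfl

end CatPB

namespace IsNCover

theorem id (n : ℕ∞) (𝒰 : Type u) [SmallCategory 𝒰] :
    IsNCover n (fun _ : PUnit.{u + 1} => 𝒰) (fun _ => 𝟭 𝒰) :=
  fun _ _ σ => ⟨PUnit.unit, σ, rfl⟩

variable {n : ℕ∞} {ι : Type u} {𝒱 : ι → Type u} [∀ i, SmallCategory (𝒱 i)]
  {φ : ∀ i, 𝒱 i ⥤ 𝒰}

theorem pullback (hφ : IsNCover n 𝒱 φ) {𝒲 : Type u} [SmallCategory 𝒲] (ψ : 𝒲 ⥤ 𝒰) :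
    IsNCover n (fun i => CatPB ψ (φ i)) (fun i => pbFst ψ (φ i)) := by
  intro k hk σ
  obtain ⟨i, τ, hτ⟩ := hφ k hk (nerveMap ψ σ)
  exact ⟨i, CatPB.lift ψ (φ i) σ τ hτ.symm, CatPB.lift_comp_pbFst ψ (φ i) σ τ hτ.symm⟩

theorem comp (hφ : IsNCover n 𝒱 φ) {κ : ι → Type u} {𝒲 : ∀ i, κ i → Type u}
    [∀ i j, SmallCategory (𝒲 i j)] {ψ : ∀ i j, 𝒲 i j ⥤ 𝒱 i}
    (hψ : ∀ i, IsNCover n (𝒲 i) (ψ i)) :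
    IsNCover n (fun p : Σ i, κ i => 𝒲 p.1 p.2) (fun p => ψ p.1 p.2 ⋙ φ p.1) := by
  intro k hk σ
  obtain ⟨i, τ, rfl⟩ := hφ k hk σ
  obtain ⟨j, ρ, rfl⟩ := hψ i k hk τ
  exact ⟨⟨i, j⟩, ρ, rfl⟩

end IsNCover

/-- Fix `n ∈ ℕ ∪ {∞}`.  The `n`-covers define a pretopology on the category of small
categories:
(i) for every small category `𝒰` the singleton family `{1_𝒰}` is an `n`-cover;
(ii) the family of pullback projections of an `n`-cover along any functor is an `n`-cover;
(iii) the composite of `n`-covers of the members of an `n`-cover is an `n`-cover. -/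
theorem statement2 (n : ℕ∞) :
    (∀ (𝒰 : Type u) [SmallCategory 𝒰],
      IsNCover n (fun _ : PUnit.{u + 1} => 𝒰) (fun _ => 𝟭 𝒰)) ∧
    (∀ (𝒰 : Type u) [SmallCategory 𝒰] {ι : Type u} (𝒱 : ι → Type u)
      [∀ i, SmallCategory (𝒱 i)] (φ : ∀ i, 𝒱 i ⥤ 𝒰), IsNCover n 𝒱 φ →
      ∀ (𝒲 : Type u) [SmallCategory 𝒲] (ψ : 𝒲 ⥤ 𝒰),
        IsNCover n (fun i => CatPB ψ (φ i)) (fun i => pbFst ψ (φ i))) ∧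
    (∀ (𝒰 : Type u) [SmallCategory 𝒰] {ι : Type u} (𝒱 : ι → Type u)
      [∀ i, SmallCategory (𝒱 i)] (φ : ∀ i, 𝒱 i ⥤ 𝒰), IsNCover n 𝒱 φ →
      ∀ {κ : ι → Type u} (𝒲 : ∀ i, κ i → Type u) [∀ i j, SmallCategory (𝒲 i j)]
        (ψ : ∀ i j, 𝒲 i j ⥤ 𝒱 i), (∀ i, IsNCover n (𝒲 i) (ψ i)) →
        IsNCover n (fun p : Σ i, κ i => 𝒲 p.1 p.2) (fun p => ψ p.1 p.2 ⋙ φ p.1)) :=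
  ⟨IsNCover.id n, fun _ _ _ _ _ _ hφ _ _ ψ => hφ.pullback ψ,
    fun _ _ _ _ _ _ hφ _ _ _ _ hψ => hφ.comp hψ⟩
end

section
/- A graded functor (φ, F) : (𝒱, 𝔟) → (𝒰, 𝔞) between map-graded categories is cartesian with respect to the projection functor Ψ : Map → Cat if and only if: (1) for every V ∈ 𝒱 the map F_V : 𝔟_V → 𝔞_{φ(V)} is a bijection, and (2) for every v : V → V' in 𝒱, B ∈ 𝔟_V, B' ∈ 𝔟_{V'}, the map 𝔟_v(B,B') → 𝔞_{φ(v)}(F(B), F(B')) is an isomorphism of k-modules. -/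
/-!
The restricted graded category `𝔞^φ` comes with `δ = restrictProj φ 𝔞 : 𝔞^φ → 𝔞` over `φ`, and
every `H : 𝔠 → 𝔞` over `ψ ⋙ φ` factors as `δ ∘ H♭` with `H♭ = H.toRestrict : 𝔠 → 𝔞^φ` over `ψ`.
If `F` is cartesian, lifting `δ` gives `G : 𝔞^φ → 𝔟` over `𝟭 𝒱` with `F ∘ G = δ`, and then
`F ∘ (G ∘ F♭) = δ ∘ F♭ = F` forces `G ∘ F♭ = 1`, so `G` inverts `F` on objects and on every
morphism module. Conversely, the inverse bijections of `F` assemble into such a `G` (the functor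
laws can be checked after applying the injective maps of `F`), and `G ∘ H♭` lifts `H`.
-/

open CategoryTheory

universe u

namespace MapGr

variable (k : Type u) [CommRing k]

/-- A (`k`-linear) map-graded category `(𝒰, 𝔞)`: a set `𝔞_U` of objects over every
`U ∈ 𝒰`, a `k`-module `𝔞_u(B, A)` of morphisms over every `u : U ⟶ U'` in `𝒰`, together
with associative, unital, `k`-bilinear composition maps. -/
structure GradedCat (𝒰 : Type u) [Category.{u} 𝒰] : Type (u + 1) where
  Obj : 𝒰 → Type u
  Hom : ∀ {X Y : 𝒰}, (X ⟶ Y) → Obj X → Obj Y → ModuleCat.{u} k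
  comp : ∀ {X Y Z : 𝒰} {f : Y ⟶ Z} {g : X ⟶ Y} {C : Obj X} {B : Obj Y} {A : Obj Z},
    Hom f B A → Hom g C B → Hom (g ≫ f) C A
  id : ∀ {X : 𝒰} (A : Obj X), Hom (𝟙 X) A A
  comp_add_left : ∀ {X Y Z : 𝒰} {f : Y ⟶ Z} {g : X ⟶ Y} {C : Obj X} {B : Obj Y}
    {A : Obj Z} (x x' : Hom f B A) (y : Hom g C B),
    comp (x + x') y = comp x y + comp x' y
  comp_add_right : ∀ {X Y Z : 𝒰} {f : Y ⟶ Z} {g : X ⟶ Y} {C : Obj X} {B : Obj Y}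
    {A : Obj Z} (x : Hom f B A) (y y' : Hom g C B),
    comp x (y + y') = comp x y + comp x y'
  comp_smul_left : ∀ {X Y Z : 𝒰} {f : Y ⟶ Z} {g : X ⟶ Y} {C : Obj X} {B : Obj Y}
    {A : Obj Z} (r : k) (x : Hom f B A) (y : Hom g C B),
    comp (r • x) y = r • comp x y
  comp_smul_right : ∀ {X Y Z : 𝒰} {f : Y ⟶ Z} {g : X ⟶ Y} {C : Obj X} {B : Obj Y}
    {A : Obj Z} (r : k) (x : Hom f B A) (y : Hom g C B),
    comp x (r • y) = r • comp x y
  comp_id : ∀ {X Y : 𝒰} {f : X ⟶ Y} {B : Obj X} {A : Obj Y} (x : Hom f B A),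
    HEq (comp x (id B)) x
  id_comp : ∀ {X Y : 𝒰} {f : X ⟶ Y} {B : Obj X} {A : Obj Y} (x : Hom f B A),
    HEq (comp (id A) x) x
  assoc : ∀ {W X Y Z : 𝒰} {f : Y ⟶ Z} {g : X ⟶ Y} {h : W ⟶ X} {D : Obj W} {C : Obj X}
    {B : Obj Y} {A : Obj Z} (x : Hom f B A) (y : Hom g C B) (z : Hom h D C),
    HEq (comp (comp x y) z) (comp x (comp y z))

variable {k}
variable {𝒰 : Type u} [Category.{u} 𝒰]

namespace GradedCat

variable (𝔞 : GradedCat k 𝒰)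

/-- Transport of graded morphisms along an equality of underlying morphisms of `𝒰`. -/
def Hcast {X Y : 𝒰} {f g : X ⟶ Y} (h : f = g) {B : 𝔞.Obj X} {A : 𝔞.Obj Y}
    (x : 𝔞.Hom f B A) : 𝔞.Hom g B A :=
  _root_.cast (by rw [h]) x

theorem Hcast_heq {X Y : 𝒰} {f g : X ⟶ Y} (h : f = g) {B : 𝔞.Obj X} {A : 𝔞.Obj Y}
    (x : 𝔞.Hom f B A) : HEq (𝔞.Hcast h x) x :=
  cast_heq _ _

theorem Hcast_add {X Y : 𝒰} {f g : X ⟶ Y} (h : f = g) {B : 𝔞.Obj X} {A : 𝔞.Obj Y}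
    (x y : 𝔞.Hom f B A) : 𝔞.Hcast h (x + y) = 𝔞.Hcast h x + 𝔞.Hcast h y := by
  subst h; rfl

theorem Hcast_smul {X Y : 𝒰} {f g : X ⟶ Y} (h : f = g) {B : 𝔞.Obj X} {A : 𝔞.Obj Y}
    (r : k) (x : 𝔞.Hom f B A) : 𝔞.Hcast h (r • x) = r • 𝔞.Hcast h x := by
  subst h; rfl

theorem comp_congr {X Y Z : 𝒰} {f f' : Y ⟶ Z} (hf : f = f') {g g' : X ⟶ Y} (hg : g = g')
    {C : 𝔞.Obj X} {B : 𝔞.Obj Y} {A : 𝔞.Obj Z} {x : 𝔞.Hom f B A} {x' : 𝔞.Hom f' B A}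
    (hx : HEq x x') {y : 𝔞.Hom g C B} {y' : 𝔞.Hom g' C B} (hy : HEq y y') :
    HEq (𝔞.comp x y) (𝔞.comp x' y') := by
  subst hf; subst hg; rw [eq_of_heq hx, eq_of_heq hy]

end GradedCat

variable {𝒱 : Type u} [Category.{u} 𝒱]

/-- The `𝒱`-graded category `𝔞^φ` obtained by restricting a `𝒰`-graded category `𝔞`
along a functor `φ : 𝒱 ⥤ 𝒰`:  `(𝔞^φ)_V = 𝔞_{φ V}` and `(𝔞^φ)_v(A, A') = 𝔞_{φ v}(A, A')`. -/
def GradedCat.restrict (φ : 𝒱 ⥤ 𝒰) (𝔞 : GradedCat k 𝒰) : GradedCat k 𝒱 where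
  Obj V := 𝔞.Obj (φ.obj V)
  Hom f B A := 𝔞.Hom (φ.map f) B A
  comp x y := 𝔞.Hcast (φ.map_comp _ _).symm (𝔞.comp x y)
  id A := 𝔞.Hcast (φ.map_id _).symm (𝔞.id A)
  comp_add_left x x' y := by rw [𝔞.comp_add_left, 𝔞.Hcast_add]
  comp_add_right x y y' := by rw [𝔞.comp_add_right, 𝔞.Hcast_add]
  comp_smul_left r x y := by rw [𝔞.comp_smul_left, 𝔞.Hcast_smul]
  comp_smul_right r x y := by rw [𝔞.comp_smul_right, 𝔞.Hcast_smul]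
  comp_id x :=
    ((𝔞.Hcast_heq _ _).trans
      ((𝔞.comp_congr rfl (φ.map_id _) HEq.rfl (𝔞.Hcast_heq _ _)).trans (𝔞.comp_id _)))
  id_comp x :=
    ((𝔞.Hcast_heq _ _).trans
      ((𝔞.comp_congr (φ.map_id _) rfl (𝔞.Hcast_heq _ _) HEq.rfl).trans (𝔞.id_comp _)))
  assoc x y z := by
    refine ((𝔞.Hcast_heq _ _).trans ?_).trans (𝔞.Hcast_heq _ _).symm
    refine ((𝔞.comp_congr (φ.map_comp _ _) rfl (𝔞.Hcast_heq _ _) HEq.rfl).trans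
      (𝔞.assoc _ _ _)).trans ?_
    exact 𝔞.comp_congr rfl (φ.map_comp _ _).symm HEq.rfl (𝔞.Hcast_heq _ _).symm

variable (k)

/-- A graded functor `(φ, F) : (𝒱, 𝔟) → (𝒰, 𝔞)` over a functor `φ : 𝒱 ⥤ 𝒰`: maps
`F_V : 𝔟_V → 𝔞_{φ V}` on objects and `k`-linear maps `𝔟_v(B, B') → 𝔞_{φ v}(F B, F B')`
on graded morphisms, preserving composition and identities. -/
structure GradedFunctor (φ : 𝒱 ⥤ 𝒰) (𝔟 : GradedCat k 𝒱) (𝔞 : GradedCat k 𝒰) :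
    Type u where
  obj : ∀ {V : 𝒱}, 𝔟.Obj V → 𝔞.Obj (φ.obj V)
  map : ∀ {V V' : 𝒱} (f : V ⟶ V') {B : 𝔟.Obj V} {B' : 𝔟.Obj V'},
    𝔟.Hom f B B' → 𝔞.Hom (φ.map f) (obj B) (obj B')
  map_add : ∀ {V V' : 𝒱} (f : V ⟶ V') {B : 𝔟.Obj V} {B' : 𝔟.Obj V'}
    (x y : 𝔟.Hom f B B'), map f (x + y) = map f x + map f y
  map_smul : ∀ {V V' : 𝒱} (f : V ⟶ V') {B : 𝔟.Obj V} {B' : 𝔟.Obj V'} (r : k)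
    (x : 𝔟.Hom f B B'), map f (r • x) = r • map f x
  map_id : ∀ {V : 𝒱} (B : 𝔟.Obj V), HEq (map (𝟙 V) (𝔟.id B)) (𝔞.id (obj B))
  map_comp : ∀ {V V' V'' : 𝒱} {f : V' ⟶ V''} {g : V ⟶ V'} {C : 𝔟.Obj V} {B : 𝔟.Obj V'}
    {A : 𝔟.Obj V''} (x : 𝔟.Hom f B A) (y : 𝔟.Hom g C B),
    HEq (map (g ≫ f) (𝔟.comp x y)) (𝔞.comp (map f x) (map g y))

variable {k}

namespace GradedFunctor

variable {φ : 𝒱 ⥤ 𝒰} {𝔟 : GradedCat k 𝒱} {𝔞 : GradedCat k 𝒰}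

theorem map_congr (F : GradedFunctor k φ 𝔟 𝔞) {V V' : 𝒱} {f g : V ⟶ V'} (hfg : f = g)
    {B : 𝔟.Obj V} {B' : 𝔟.Obj V'} {x : 𝔟.Hom f B B'} {y : 𝔟.Hom g B B'} (h : HEq x y) :
    HEq (F.map f x) (F.map g y) := by
  subst hfg; rw [eq_of_heq h]

/-- A graded functor is subcartesian (cartesian with respect to `Map → Mas`) iff all its
maps between graded `Hom`-modules are bijective. -/
def Subcartesian (F : GradedFunctor k φ 𝔟 𝔞) : Prop :=
  ∀ {V V' : 𝒱} (f : V ⟶ V') (B : 𝔟.Obj V) (B' : 𝔟.Obj V'),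
    Function.Bijective (fun x : 𝔟.Hom f B B' => F.map f x)

variable {𝒲 : Type u} [Category.{u} 𝒲] {ψ : 𝒲 ⥤ 𝒱} {𝔠 : GradedCat k 𝒲}

/-- Composition of graded functors. -/
def comp (F : GradedFunctor k φ 𝔟 𝔞) (G : GradedFunctor k ψ 𝔠 𝔟) :
    GradedFunctor k (ψ ⋙ φ) 𝔠 𝔞 where
  obj C := F.obj (G.obj C)
  map := fun {V V'} f {B B'} x => F.map (ψ.map f) (G.map f x)
  map_add := by intro V V' f B B' x y; rw [G.map_add, F.map_add]
  map_smul := by intro V V' f B B' r x; rw [G.map_smul, F.map_smul]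
  map_id B := (F.map_congr (ψ.map_id _) (G.map_id _)).trans (F.map_id _)
  map_comp x y := (F.map_congr (ψ.map_comp _ _) (G.map_comp _ _)).trans (F.map_comp _ _)

end GradedFunctor

/-- The canonical cartesian graded functor `δ^{φ,𝔞} : (𝒱, 𝔞^φ) → (𝒰, 𝔞)`. -/
def restrictProj (φ : 𝒱 ⥤ 𝒰) (𝔞 : GradedCat k 𝒰) :
    GradedFunctor k φ (𝔞.restrict φ) 𝔞 where
  obj A := A
  map := fun {V V'} _f {B B'} x => x
  map_add := by intros; rfl
  map_smul := by intros; rfl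
  map_id B := 𝔞.Hcast_heq (φ.map_id _).symm (𝔞.id B)
  map_comp x y := 𝔞.Hcast_heq (φ.map_comp _ _).symm (𝔞.comp x y)

theorem restrictProj_subcartesian (φ : 𝒱 ⥤ 𝒰) (𝔞 : GradedCat k 𝒰) :
    (restrictProj φ 𝔞).Subcartesian := by
  intro V V' f B B'
  constructor
  · intro a b h
    exact h
  · intro y
    exact ⟨y, rfl⟩

end MapGr

namespace MapGr

variable {k : Type u} [CommRing k]
variable {𝒱 𝒰 : Type u} [Category.{u} 𝒱] [Category.{u} 𝒰]

/-- A graded functor `(φ, F) : (𝒱, 𝔟) → (𝒰, 𝔞)` is cartesian with respect to the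
projection `Ψ : Map → Cat` iff for every map-graded category `(𝒲, 𝔠)` and every functor
`ψ : 𝒲 ⥤ 𝒱`, composition with `(φ, F)` is a bijection from the graded functors
`(𝒲, 𝔠) → (𝒱, 𝔟)` over `ψ` to the graded functors `(𝒲, 𝔠) → (𝒰, 𝔞)` over `ψ ⋙ φ`. -/
def CartesianWrtCat {φ : 𝒱 ⥤ 𝒰} {𝔟 : GradedCat k 𝒱} {𝔞 : GradedCat k 𝒰}
    (F : GradedFunctor k φ 𝔟 𝔞) : Prop :=
  ∀ (𝒲 : Type u) [Category.{u} 𝒲] (𝔠 : GradedCat k 𝒲) (ψ : 𝒲 ⥤ 𝒱),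
    Function.Bijective (fun G : GradedFunctor k ψ 𝔠 𝔟 => F.comp G)

variable {𝒲 𝒳 : Type u} [Category.{u} 𝒲] [Category.{u} 𝒳]

namespace GradedCat

variable (𝔞 : GradedCat k 𝒰) {X Y Z : 𝒰}

theorem exists_heq {f : X ⟶ Y} {B C : 𝔞.Obj X} {B' C' : 𝔞.Obj Y} (hB : B = C)
    (hB' : B' = C') (x : 𝔞.Hom f B B') : ∃ y : 𝔞.Hom f C C', HEq y x := by
  subst hB hB'
  exact ⟨x, HEq.rfl⟩

theorem add_heq {f : X ⟶ Y} {B C : 𝔞.Obj X} {B' C' : 𝔞.Obj Y} (hB : B = C)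
    (hB' : B' = C') {x y : 𝔞.Hom f B B'} {x' y' : 𝔞.Hom f C C'} (hx : HEq x x')
    (hy : HEq y y') : HEq (x + y) (x' + y') := by
  subst hB hB'
  rw [eq_of_heq hx, eq_of_heq hy]

theorem smul_heq {f : X ⟶ Y} {B C : 𝔞.Obj X} {B' C' : 𝔞.Obj Y} (hB : B = C)
    (hB' : B' = C') (r : k) {x : 𝔞.Hom f B B'} {x' : 𝔞.Hom f C C'} (hx : HEq x x') :
    HEq (r • x) (r • x') := by
  subst hB hB'
  rw [eq_of_heq hx]

theorem id_heq {A A' : 𝔞.Obj X} (h : A = A') : HEq (𝔞.id A) (𝔞.id A') := by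
  subst h
  rfl

theorem comp_heq {f : Y ⟶ Z} {g : X ⟶ Y} {C C' : 𝔞.Obj X} {B B' : 𝔞.Obj Y}
    {A A' : 𝔞.Obj Z} (hC : C = C') (hB : B = B') (hA : A = A')
    {x : 𝔞.Hom f B A} {x' : 𝔞.Hom f B' A'} (hx : HEq x x')
    {y : 𝔞.Hom g C B} {y' : 𝔞.Hom g C' B'} (hy : HEq y y') :
    HEq (𝔞.comp x y) (𝔞.comp x' y') := by
  subst hC hB hA
  rw [eq_of_heq hx, eq_of_heq hy]

end GradedCat

namespace GradedFunctor

variable {φ : 𝒱 ⥤ 𝒰} {ψ : 𝒲 ⥤ 𝒱} {𝔞 : GradedCat k 𝒰} {𝔟 : GradedCat k 𝒱}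
  {𝔠 : GradedCat k 𝒲}

theorem ext {χ : 𝒲 ⥤ 𝒳} {𝔡 : GradedCat k 𝒳} {G G' : GradedFunctor k χ 𝔠 𝔡}
    (hobj : ∀ {W : 𝒲} (C : 𝔠.Obj W), G.obj C = G'.obj C)
    (hmap : ∀ {W W' : 𝒲} (f : W ⟶ W') {C : 𝔠.Obj W} {C' : 𝔠.Obj W'} (x : 𝔠.Hom f C C'),
      HEq (G.map f x) (G'.map f x)) : G = G' := by
  obtain ⟨o, m, _, _, _, _⟩ := G
  obtain ⟨o', m', _, _, _, _⟩ := G'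
  obtain rfl : @o = @o' := by
    funext W C
    exact hobj C
  obtain rfl : @m = @m' := by
    funext W W' f C C' x
    exact eq_of_heq (hmap f x)
  rfl

theorem map_heq_of_heq (F : GradedFunctor k φ 𝔟 𝔞) {V V' : 𝒱} (f : V ⟶ V')
    {B C : 𝔟.Obj V} {B' C' : 𝔟.Obj V'} (hB : B = C) (hB' : B' = C')
    {x : 𝔟.Hom f B B'} {y : 𝔟.Hom f C C'} (h : HEq x y) :
    HEq (F.map f x) (F.map f y) := by
  subst hB hB'
  rw [eq_of_heq h]

theorem heq_of_map_heq (F : GradedFunctor k φ 𝔟 𝔞)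
    (hinj : ∀ {V V' : 𝒱} (f : V ⟶ V') (B : 𝔟.Obj V) (B' : 𝔟.Obj V'),
      Function.Injective (fun x : 𝔟.Hom f B B' => F.map f x))
    {V V' : 𝒱} (f : V ⟶ V') {B C : 𝔟.Obj V} {B' C' : 𝔟.Obj V'} (hB : B = C)
    (hB' : B' = C') {x : 𝔟.Hom f B B'} {y : 𝔟.Hom f C C'}
    (h : HEq (F.map f x) (F.map f y)) : HEq x y := by
  subst hB hB'
  exact heq_of_eq (hinj f B B' (eq_of_heq h))

theorem exists_map_heq (F : GradedFunctor k φ 𝔟 𝔞) (hmap : F.Subcartesian) {V V' : 𝒱}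
    (f : V ⟶ V') {B : 𝔟.Obj V} {B' : 𝔟.Obj V'} {A : 𝔞.Obj (φ.obj V)}
    {A' : 𝔞.Obj (φ.obj V')} (hB : F.obj B = A) (hB' : F.obj B' = A')
    (y : 𝔞.Hom (φ.map f) A A') : ∃ x : 𝔟.Hom f B B', HEq (F.map f x) y := by
  obtain ⟨y', hy'⟩ := 𝔞.exists_heq hB.symm hB'.symm y
  obtain ⟨x, rfl⟩ := (hmap f B B').2 y'
  exact ⟨x, hy'⟩

variable (𝔟) in
protected def id : GradedFunctor k (𝟭 𝒱) 𝔟 𝔟 where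
  obj B := B
  map := fun {_ _} _ {_ _} x => x
  map_add _ _ _ _ _ := rfl
  map_smul _ _ _ _ _ := rfl
  map_id _ := HEq.rfl
  map_comp _ _ := HEq.rfl

def toRestrict (H : GradedFunctor k (ψ ⋙ φ) 𝔠 𝔞) : GradedFunctor k ψ 𝔠 (𝔞.restrict φ) where
  obj C := H.obj C
  map f _ _ x := H.map f x
  map_add f _ _ x y := H.map_add f x y
  map_smul f _ _ r x := H.map_smul f r x
  map_id C := (H.map_id C).trans (𝔞.Hcast_heq (φ.map_id _).symm _).symm
  map_comp x y := (H.map_comp x y).trans (𝔞.Hcast_heq (φ.map_comp _ _).symm _).symm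

theorem restrictProj_comp_toRestrict (H : GradedFunctor k (ψ ⋙ φ) 𝔠 𝔞) :
    (restrictProj φ 𝔞).comp H.toRestrict = H :=
  rfl

theorem comp_assoc {χ : 𝒳 ⥤ 𝒲} {𝔡 : GradedCat k 𝒳} (F : GradedFunctor k φ 𝔟 𝔞)
    (G : GradedFunctor k ψ 𝔠 𝔟) (K : GradedFunctor k χ 𝔡 𝔠) :
    (F.comp G).comp K = F.comp (G.comp K) :=
  rfl

theorem comp_id (F : GradedFunctor k φ 𝔟 𝔞) : F.comp (GradedFunctor.id 𝔟) = F :=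
  rfl

theorem comp_injective (F : GradedFunctor k φ 𝔟 𝔞)
    (hobj : ∀ V : 𝒱, Function.Injective (fun B : 𝔟.Obj V => F.obj B))
    (hmap : ∀ {V V' : 𝒱} (f : V ⟶ V') (B : 𝔟.Obj V) (B' : 𝔟.Obj V'),
      Function.Injective (fun x : 𝔟.Hom f B B' => F.map f x)) :
    Function.Injective (fun G : GradedFunctor k ψ 𝔠 𝔟 => F.comp G) := by
  intro G G' h
  have hGobj : ∀ {W : 𝒲} (C : 𝔠.Obj W), G.obj C = G'.obj C :=
    fun C => hobj _ (congrArg (fun K => K.obj C) h)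
  refine ext hGobj fun f C C' x => ?_
  exact F.heq_of_map_heq hmap (ψ.map f) (hGobj C) (hGobj C')
    (congr_arg_heq (fun K => K.map f x) h)

section OfInverse

variable {G : GradedFunctor k (𝟭 𝒱) (𝔞.restrict φ) 𝔟} {F : GradedFunctor k φ 𝔟 𝔞}

theorem obj_bijective_of_inverse (hFG : F.comp G = restrictProj φ 𝔞)
    (hGF : G.comp (F.toRestrict (ψ := 𝟭 𝒱)) = GradedFunctor.id 𝔟) (V : 𝒱) :
    Function.Bijective (fun B : 𝔟.Obj V => F.obj B) := by
  refine Function.bijective_iff_has_inverse.2 ⟨fun A => G.obj A, fun B => ?_, fun A => ?_⟩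
  · exact congrArg (fun K => K.obj B) hGF
  · exact congrArg (fun K => K.obj A) hFG

theorem subcartesian_of_inverse (hFG : F.comp G = restrictProj φ 𝔞)
    (hGF : G.comp (F.toRestrict (ψ := 𝟭 𝒱)) = GradedFunctor.id 𝔟) : F.Subcartesian := by
  intro V V' f B B'
  have hGFobj : ∀ {V : 𝒱} (B : 𝔟.Obj V), G.obj (F.obj B) = B :=
    fun B => congrArg (fun K => K.obj B) hGF
  have hGFmap : ∀ {B : 𝔟.Obj V} {B' : 𝔟.Obj V'} (x : 𝔟.Hom f B B'),
      HEq (G.map f (F.map f x)) x :=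
    fun x => congr_arg_heq (fun K => K.map f x) hGF
  constructor
  · intro x x' hxx'
    exact eq_of_heq ((hGFmap x).symm.trans ((heq_of_eq (congrArg (G.map f) hxx')).trans
      (hGFmap x')))
  · intro y
    obtain ⟨x, hx⟩ := 𝔟.exists_heq (hGFobj B) (hGFobj B') (G.map f y)
    exact ⟨x, eq_of_heq ((F.map_heq_of_heq f (hGFobj B).symm (hGFobj B').symm hx).trans
      (congr_arg_heq (fun K => K.map f y) hFG))⟩

end OfInverse

section Inverse

variable (F : GradedFunctor k φ 𝔟 𝔞)
  (hobj : ∀ V : 𝒱, Function.Bijective (fun B : 𝔟.Obj V => F.obj B))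

noncomputable def invObj {V : 𝒱} (A : 𝔞.Obj (φ.obj V)) : 𝔟.Obj V :=
  (Equiv.ofBijective _ (hobj V)).symm A

theorem obj_invObj {V : 𝒱} (A : 𝔞.Obj (φ.obj V)) : F.obj (F.invObj hobj A) = A :=
  (Equiv.ofBijective _ (hobj V)).apply_symm_apply A

theorem exists_map_heq_invObj (hmap : F.Subcartesian) {V V' : 𝒱} (f : V ⟶ V')
    (A : 𝔞.Obj (φ.obj V)) (A' : 𝔞.Obj (φ.obj V')) (y : 𝔞.Hom (φ.map f) A A') :
    ∃ x : 𝔟.Hom f (F.invObj hobj A) (F.invObj hobj A'), HEq (F.map f x) y :=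
  F.exists_map_heq hmap f (F.obj_invObj hobj A) (F.obj_invObj hobj A') y

noncomputable def inverse (hmap : F.Subcartesian) :
    GradedFunctor k (𝟭 𝒱) (𝔞.restrict φ) 𝔟 where
  obj A := F.invObj hobj A
  map f A A' y := (F.exists_map_heq_invObj hobj hmap f A A' y).choose
  map_add f A A' x y := by
    refine (hmap f _ _).1 (eq_of_heq ?_)
    refine ((F.exists_map_heq_invObj hobj hmap f A A' _).choose_spec).trans ?_
    simp only [F.map_add]
    exact (𝔞.add_heq (F.obj_invObj hobj A) (F.obj_invObj hobj A')
      (F.exists_map_heq_invObj hobj hmap f A A' x).choose_spec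
      (F.exists_map_heq_invObj hobj hmap f A A' y).choose_spec).symm
  map_smul f A A' r x := by
    refine (hmap f _ _).1 (eq_of_heq ?_)
    refine ((F.exists_map_heq_invObj hobj hmap f A A' _).choose_spec).trans ?_
    simp only [F.map_smul]
    exact (𝔞.smul_heq (F.obj_invObj hobj A) (F.obj_invObj hobj A') r
      (F.exists_map_heq_invObj hobj hmap f A A' x).choose_spec).symm
  map_id A := by
    refine heq_of_eq ((hmap _ _ _).1 (eq_of_heq ?_))
    refine ((F.exists_map_heq_invObj hobj hmap _ A A _).choose_spec.trans
      (𝔞.Hcast_heq (φ.map_id _).symm _)).trans ?_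
    exact ((F.map_id _).trans (𝔞.id_heq (F.obj_invObj hobj A))).symm
  map_comp {_ _ _ f g C B A} x y := by
    refine heq_of_eq ((hmap _ _ _).1 (eq_of_heq ?_))
    refine ((F.exists_map_heq_invObj hobj hmap _ C A _).choose_spec.trans
      (𝔞.Hcast_heq (φ.map_comp _ _).symm _)).trans ?_
    exact ((F.map_comp _ _).trans
      (𝔞.comp_heq (F.obj_invObj hobj C) (F.obj_invObj hobj B) (F.obj_invObj hobj A)
        (F.exists_map_heq_invObj hobj hmap f B A x).choose_spec
        (F.exists_map_heq_invObj hobj hmap g C B y).choose_spec)).symm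

theorem comp_inverse (hmap : F.Subcartesian) :
    F.comp (F.inverse hobj hmap) = restrictProj φ 𝔞 :=
  ext (fun A => F.obj_invObj hobj A)
    fun f A A' y => (F.exists_map_heq_invObj hobj hmap f A A' y).choose_spec

end Inverse

end GradedFunctor

open GradedFunctor

section

variable {φ : 𝒱 ⥤ 𝒰} {𝔟 : GradedCat k 𝒱} {𝔞 : GradedCat k 𝒰} {F : GradedFunctor k φ 𝔟 𝔞}

theorem CartesianWrtCat.exists_inverse (hF : CartesianWrtCat F) :
    ∃ G : GradedFunctor k (𝟭 𝒱) (𝔞.restrict φ) 𝔟,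
      F.comp G = restrictProj φ 𝔞 ∧ G.comp (F.toRestrict (ψ := 𝟭 𝒱)) = GradedFunctor.id 𝔟 := by
  obtain ⟨G, hFG⟩ := (hF 𝒱 (𝔞.restrict φ) (𝟭 𝒱)).2 (restrictProj φ 𝔞)
  refine ⟨G, hFG, (hF 𝒱 𝔟 (𝟭 𝒱)).1 ?_⟩
  let R := F.toRestrict (ψ := 𝟭 𝒱)
  calc F.comp (G.comp R) = (F.comp G).comp R := (comp_assoc F G R).symm
    _ = (restrictProj φ 𝔞).comp R := congrArg (·.comp R) hFG
    _ = F := restrictProj_comp_toRestrict (ψ := 𝟭 𝒱) F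
    _ = F.comp (GradedFunctor.id 𝔟) := (comp_id F).symm

end

/-- A graded functor `(φ, F) : (𝒱, 𝔟) → (𝒰, 𝔞)` is cartesian with respect to the
projection `Ψ : Map → Cat` if and only if (1) every map `F_V : 𝔟_V → 𝔞_{φ V}` on objects
is a bijection and (2) every map `𝔟_v(B, B') → 𝔞_{φ v}(F B, F B')` on graded morphisms is
an isomorphism of `k`-modules. -/
theorem statement6 {φ : 𝒱 ⥤ 𝒰} {𝔟 : GradedCat k 𝒱} {𝔞 : GradedCat k 𝒰}
    (F : GradedFunctor k φ 𝔟 𝔞) :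
    CartesianWrtCat F ↔
      ((∀ V : 𝒱, Function.Bijective (fun B : 𝔟.Obj V => F.obj B)) ∧
        F.Subcartesian) := by
  constructor
  · intro hF
    obtain ⟨G, hFG, hGF⟩ := hF.exists_inverse
    exact ⟨obj_bijective_of_inverse hFG hGF, subcartesian_of_inverse hFG hGF⟩
  · rintro ⟨hobj, hmap⟩ 𝒲 _ 𝔠 ψ
    refine ⟨F.comp_injective (fun V => (hobj V).1) (fun f B B' => (hmap f B B').1),
      fun H => ⟨(F.inverse hobj hmap).comp H.toRestrict, ?_⟩⟩
    calc F.comp ((F.inverse hobj hmap).comp H.toRestrict)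
        = (F.comp (F.inverse hobj hmap)).comp H.toRestrict := (comp_assoc _ _ _).symm
      _ = (restrictProj φ 𝔞).comp H.toRestrict :=
          congrArg (·.comp H.toRestrict) (F.comp_inverse hobj hmap)
      _ = H := restrictProj_comp_toRestrict H

end MapGr
end

section
/- Let (𝒵, 𝒱) be an ideal-subcategory decomposition of a small category 𝒰, let 𝔞 be a 𝒰-graded category, let 𝔟 = 𝔞^φ for the inclusion φ : 𝒱 ⊆ 𝒰, and let M be an 𝔞-bimodule. Let M_𝒵 ⊆ M be the sub-bimodule with (M_𝒵)_u(B,A) = M_u(B,A) for u ∈ 𝒵 and 0 otherwise (a sub-bimodule because 𝒵 is an ideal), and let M_𝒱 = M/M_𝒵, so that (M_𝒱)_u(B,A) = M_u(B,A) for u ∈ 𝒱 and 0 otherwise. Then the restriction φ* : C_𝒰(𝔞, M) → C_𝒱(𝔟, M^φ) is surjective, and the short exact sequence of complexes 0 → C_𝒰(𝔞, M_𝒵) → C_𝒰(𝔞, M) → C_𝒰(𝔞, M_𝒱) → 0 induced by 0 → M_𝒵 → M → M_𝒱 → 0 is canonically isomorphic to the sequence 0 → ker(φ*) → C_𝒰(𝔞,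 M) → C_𝒱(𝔟, M^φ) → 0. In particular C_𝒰(𝔞, M_𝒵) ≅ C_{𝒰∖𝒱}(𝔞, M) := ker(φ*) and C_𝒰(𝔞, M_𝒱) ≅ C_𝒱(𝔟, M^φ). -/
open CategoryTheory

universe u

namespace MapGr

variable {k : Type u} [CommRing k]
variable {𝒰 : Type u} [Category.{u} 𝒰]

/-- The category `𝒰^♯` associated to a `𝒰`-graded category `𝔞`: objects are pairs
`(U, A)` with `A ∈ 𝔞_U`, and morphisms `(U, A) → (U', A')` are the morphisms `U ⟶ U'`
of `𝒰`. -/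
def Sh (𝔞 : GradedCat k 𝒰) : Type u := Σ X : 𝒰, 𝔞.Obj X

instance (𝔞 : GradedCat k 𝒰) : Category.{u} (Sh 𝔞) where
  Hom A B := A.1 ⟶ B.1
  id A := 𝟙 A.1
  comp f g := f ≫ g
  id_comp := by intros; simp
  comp_id := by intros; simp
  assoc := by intros; simp

/-- The underlying morphism of `𝒰` of a morphism of `𝒰^♯`. -/
def Sh.base {𝔞 : GradedCat k 𝒰} {A B : Sh 𝔞} (f : A ⟶ B) : A.1 ⟶ B.1 := f

@[simp] theorem Sh.base_id {𝔞 : GradedCat k 𝒰} (A : Sh 𝔞) :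
    Sh.base (𝟙 A) = 𝟙 A.1 := rfl

@[simp] theorem Sh.base_comp {𝔞 : GradedCat k 𝒰} {A B C : Sh 𝔞} (f : A ⟶ B) (g : B ⟶ C) :
    Sh.base (f ≫ g) = Sh.base f ≫ Sh.base g := rfl

/-- `n`-simplices of the simplicial nerve of a category with specified endpoints:
strings `X = X₀ → X₁ → ⋯ → Xₙ = Y` of `n` composable morphisms. -/
inductive Pth (C : Type u) [Category.{u} C] : ℕ → C → C → Type u
  | nil (X : C) : Pth C 0 X X
  | cons {n : ℕ} {X Y Z : C} (f : X ⟶ Y) (p : Pth C n Y Z) : Pth C (n + 1) X Z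

/-- The composite `|u| = uₙ₋₁ ⋯ u₁ u₀` of a string of composable morphisms. -/
def Pth.comp {C : Type u} [Category.{u} C] : ∀ {n : ℕ} {X Y : C}, Pth C n X Y → (X ⟶ Y)
  | _, _, _, .nil X => 𝟙 X
  | _, _, _, .cons f p => f ≫ p.comp

@[simp] theorem Pth.comp_nil {C : Type u} [Category.{u} C] (X : C) :
    (Pth.nil X).comp = 𝟙 X := rfl

@[simp] theorem Pth.comp_cons {C : Type u} [Category.{u} C] {n : ℕ} {X Y Z : C}
    (f : X ⟶ Y) (p : Pth C n Y Z) : (Pth.cons f p).comp = f ≫ p.comp := rfl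

/-- The map induced by a functor on simplices of the nerves. -/
def Pth.map {C D : Type u} [Category.{u} C] [Category.{u} D] (F : C ⥤ D) :
    ∀ {n : ℕ} {X Y : C}, Pth C n X Y → Pth D n (F.obj X) (F.obj Y)
  | _, _, _, .nil X => .nil _
  | _, _, _, .cons f p => .cons (F.map f) (p.map F)

theorem Pth.comp_map {C D : Type u} [Category.{u} C] [Category.{u} D] (F : C ⥤ D)
    {n : ℕ} {X Y : C} (p : Pth C n X Y) : (p.map F).comp = F.map p.comp := by
  induction p with
  | nil => simp [Pth.map]
  | cons f p ih => simp [Pth.map, ih]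

/-- The set of `n`-simplices of the nerve `𝒩(𝔞) = 𝒩(𝒰^♯)` of a graded category. -/
def NerveTot (C : Type u) [Category.{u} C] (m : ℕ) : Type u :=
  Σ (X : C) (Y : C), Pth C m X Y

/-- The map induced by a functor on the set of `n`-simplices of the nerves. -/
def NerveTot.map {C D : Type u} [Category.{u} C] [Category.{u} D] (F : C ⥤ D) {m : ℕ}
    (s : NerveTot C m) : NerveTot D m :=
  ⟨F.obj s.1, F.obj s.2.1, Pth.map F s.2.2⟩

/-- A family of elements of the graded `Hom`-modules of `𝔞` lying over a simplex of the
nerve of `𝔞`. -/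
inductive PthElts {k : Type u} [CommRing k] {𝒰 : Type u} [Category.{u} 𝒰]
    (𝔞 : GradedCat k 𝒰) : ∀ {n : ℕ} {X Y : Sh 𝔞}, Pth (Sh 𝔞) n X Y → Type u
  | nil (X : Sh 𝔞) : PthElts 𝔞 (Pth.nil X)
  | cons {n : ℕ} {X Y Z : Sh 𝔞} {f : X ⟶ Y} {p : Pth (Sh 𝔞) n Y Z}
      (x : 𝔞.Hom (Sh.base f) X.2 Y.2) (e : PthElts 𝔞 p) : PthElts 𝔞 (Pth.cons f p)

variable (k)

/-- An `𝔞`-bimodule `M`: `k`-modules `M_u(B, A)` together with associative, unital,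
`k`-bilinear left and right actions of `𝔞`. -/
structure Bimod {𝒰 : Type u} [Category.{u} 𝒰] (𝔞 : GradedCat k 𝒰) : Type (u + 1) where
  M : ∀ {X Y : 𝒰}, (X ⟶ Y) → 𝔞.Obj X → 𝔞.Obj Y → ModuleCat.{u} k
  actL : ∀ {X Y Z : 𝒰} {f : Y ⟶ Z} {g : X ⟶ Y} {B : 𝔞.Obj X} {A : 𝔞.Obj Y}
    {A' : 𝔞.Obj Z}, 𝔞.Hom f A A' → M g B A → M (g ≫ f) B A'
  actR : ∀ {X Y Z : 𝒰} {f : Y ⟶ Z} {g : X ⟶ Y} {B' : 𝔞.Obj X} {B : 𝔞.Obj Y}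
    {A : 𝔞.Obj Z}, M f B A → 𝔞.Hom g B' B → M (g ≫ f) B' A
  actL_add_left : ∀ {X Y Z : 𝒰} {f : Y ⟶ Z} {g : X ⟶ Y} {B : 𝔞.Obj X} {A : 𝔞.Obj Y}
    {A' : 𝔞.Obj Z} (x x' : 𝔞.Hom f A A') (m : M g B A),
    actL (x + x') m = actL x m + actL x' m
  actL_add_right : ∀ {X Y Z : 𝒰} {f : Y ⟶ Z} {g : X ⟶ Y} {B : 𝔞.Obj X} {A : 𝔞.Obj Y}
    {A' : 𝔞.Obj Z} (x : 𝔞.Hom f A A') (m m' : M g B A),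
    actL x (m + m') = actL x m + actL x m'
  actL_smul_left : ∀ {X Y Z : 𝒰} {f : Y ⟶ Z} {g : X ⟶ Y} {B : 𝔞.Obj X} {A : 𝔞.Obj Y}
    {A' : 𝔞.Obj Z} (r : k) (x : 𝔞.Hom f A A') (m : M g B A),
    actL (r • x) m = r • actL x m
  actL_smul_right : ∀ {X Y Z : 𝒰} {f : Y ⟶ Z} {g : X ⟶ Y} {B : 𝔞.Obj X} {A : 𝔞.Obj Y}
    {A' : 𝔞.Obj Z} (r : k) (x : 𝔞.Hom f A A') (m : M g B A),
    actL x (r • m) = r • actL x m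
  actR_add_left : ∀ {X Y Z : 𝒰} {f : Y ⟶ Z} {g : X ⟶ Y} {B' : 𝔞.Obj X} {B : 𝔞.Obj Y}
    {A : 𝔞.Obj Z} (m m' : M f B A) (y : 𝔞.Hom g B' B),
    actR (m + m') y = actR m y + actR m' y
  actR_add_right : ∀ {X Y Z : 𝒰} {f : Y ⟶ Z} {g : X ⟶ Y} {B' : 𝔞.Obj X} {B : 𝔞.Obj Y}
    {A : 𝔞.Obj Z} (m : M f B A) (y y' : 𝔞.Hom g B' B),
    actR m (y + y') = actR m y + actR m y'
  actR_smul_left : ∀ {X Y Z : 𝒰} {f : Y ⟶ Z} {g : X ⟶ Y} {B' : 𝔞.Obj X} {B : 𝔞.Obj Y}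
    {A : 𝔞.Obj Z} (r : k) (m : M f B A) (y : 𝔞.Hom g B' B),
    actR (r • m) y = r • actR m y
  actR_smul_right : ∀ {X Y Z : 𝒰} {f : Y ⟶ Z} {g : X ⟶ Y} {B' : 𝔞.Obj X} {B : 𝔞.Obj Y}
    {A : 𝔞.Obj Z} (r : k) (m : M f B A) (y : 𝔞.Hom g B' B),
    actR m (r • y) = r • actR m y
  actL_id : ∀ {X Y : 𝒰} {g : X ⟶ Y} {B : 𝔞.Obj X} {A : 𝔞.Obj Y} (m : M g B A),
    HEq (actL (𝔞.id A) m) m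
  actR_id : ∀ {X Y : 𝒰} {f : X ⟶ Y} {B : 𝔞.Obj X} {A : 𝔞.Obj Y} (m : M f B A),
    HEq (actR m (𝔞.id B)) m
  actL_actL : ∀ {W X Y Z : 𝒰} {f' : Y ⟶ Z} {f : X ⟶ Y} {g : W ⟶ X} {B : 𝔞.Obj W}
    {A : 𝔞.Obj X} {A' : 𝔞.Obj Y} {A'' : 𝔞.Obj Z} (x : 𝔞.Hom f' A' A'')
    (y : 𝔞.Hom f A A') (m : M g B A),
    HEq (actL x (actL y m)) (actL (𝔞.comp x y) m)
  actR_actR : ∀ {W X Y Z : 𝒰} {f : Y ⟶ Z} {g : X ⟶ Y} {h : W ⟶ X} {B'' : 𝔞.Obj W}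
    {B' : 𝔞.Obj X} {B : 𝔞.Obj Y} {A : 𝔞.Obj Z} (m : M f B A) (y : 𝔞.Hom g B' B)
    (y' : 𝔞.Hom h B'' B'),
    HEq (actR (actR m y) y') (actR m (𝔞.comp y y'))
  actL_actR : ∀ {W X Y Z : 𝒰} {f : Y ⟶ Z} {g : X ⟶ Y} {h : W ⟶ X} {B' : 𝔞.Obj W}
    {B : 𝔞.Obj X} {A : 𝔞.Obj Y} {A' : 𝔞.Obj Z} (x : 𝔞.Hom f A A') (m : M g B A)
    (y : 𝔞.Hom h B' B),
    HEq (actL x (actR m y)) (actR (actL x m) y)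

variable {k}

namespace Bimod

variable {𝔞 : GradedCat k 𝒰} (M : Bimod k 𝔞)

/-- Transport of bimodule elements along an equality of underlying morphisms of `𝒰`. -/
def cst {X Y : 𝒰} {f g : X ⟶ Y} (h : f = g) {B : 𝔞.Obj X} {A : 𝔞.Obj Y}
    (m : M.M f B A) : M.M g B A :=
  _root_.cast (by rw [h]) m

theorem cst_heq {X Y : 𝒰} {f g : X ⟶ Y} (h : f = g) {B : 𝔞.Obj X} {A : 𝔞.Obj Y}
    (m : M.M f B A) : HEq (M.cst h m) m :=
  cast_heq _ _

theorem cst_add {X Y : 𝒰} {f g : X ⟶ Y} (h : f = g) {B : 𝔞.Obj X} {A : 𝔞.Obj Y}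
    (m m' : M.M f B A) : M.cst h (m + m') = M.cst h m + M.cst h m' := by
  subst h; rfl

theorem cst_smul {X Y : 𝒰} {f g : X ⟶ Y} (h : f = g) {B : 𝔞.Obj X} {A : 𝔞.Obj Y}
    (r : k) (m : M.M f B A) : M.cst h (r • m) = r • M.cst h m := by
  subst h; rfl

theorem actL_congr {X Y Z : 𝒰} {f f' : Y ⟶ Z} (hf : f = f') {g g' : X ⟶ Y}
    (hg : g = g') {B : 𝔞.Obj X} {A : 𝔞.Obj Y} {A' : 𝔞.Obj Z} {x : 𝔞.Hom f A A'}
    {x' : 𝔞.Hom f' A A'} (hx : HEq x x') {m : M.M g B A} {m' : M.M g' B A}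
    (hm : HEq m m') : HEq (M.actL x m) (M.actL x' m') := by
  subst hf; subst hg; rw [eq_of_heq hx, eq_of_heq hm]

theorem actR_congr {X Y Z : 𝒰} {f f' : Y ⟶ Z} (hf : f = f') {g g' : X ⟶ Y}
    (hg : g = g') {B' : 𝔞.Obj X} {B : 𝔞.Obj Y} {A : 𝔞.Obj Z} {m : M.M f B A}
    {m' : M.M f' B A} (hm : HEq m m') {y : 𝔞.Hom g B' B} {y' : 𝔞.Hom g' B' B}
    (hy : HEq y y') : HEq (M.actR m y) (M.actR m' y') := by
  subst hf; subst hg; rw [eq_of_heq hm, eq_of_heq hy]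

end Bimod

/-- The identity bimodule `1_𝔞`. -/
def GradedCat.unit (𝔞 : GradedCat k 𝒰) : Bimod k 𝔞 where
  M := 𝔞.Hom
  actL := 𝔞.comp
  actR := 𝔞.comp
  actL_add_left := 𝔞.comp_add_left
  actL_add_right := 𝔞.comp_add_right
  actL_smul_left := 𝔞.comp_smul_left
  actL_smul_right := 𝔞.comp_smul_right
  actR_add_left := 𝔞.comp_add_left
  actR_add_right := 𝔞.comp_add_right
  actR_smul_left := 𝔞.comp_smul_left
  actR_smul_right := 𝔞.comp_smul_right
  actL_id := 𝔞.id_comp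
  actR_id := 𝔞.comp_id
  actL_actL x y m := (𝔞.assoc x y m).symm
  actR_actR m y y' := 𝔞.assoc m y y'
  actL_actR x m y := (𝔞.assoc x m y).symm

variable {𝒱 : Type u} [Category.{u} 𝒱]

/-- The pullback `F*M` of an `𝔞`-bimodule along a graded functor
`(φ, F) : (𝒱, 𝔟) → (𝒰, 𝔞)`: `(F*M)_v(B, B') = M_{φ v}(F B, F B')`. -/
def Bimod.pullback {φ : 𝒱 ⥤ 𝒰} {𝔟 : GradedCat k 𝒱} {𝔞 : GradedCat k 𝒰}
    (F : GradedFunctor k φ 𝔟 𝔞) (M : Bimod k 𝔞) : Bimod k 𝔟 where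
  M f B B' := M.M (φ.map f) (F.obj B) (F.obj B')
  actL := fun {X Y Z f g B A A'} x m =>
    M.cst (φ.map_comp g f).symm (M.actL (F.map f x) m)
  actR := fun {X Y Z f g B' B A} m y =>
    M.cst (φ.map_comp g f).symm (M.actR m (F.map g y))
  actL_add_left := by
    intros; rw [F.map_add, M.actL_add_left, M.cst_add]
  actL_add_right := by
    intros; rw [M.actL_add_right, M.cst_add]
  actL_smul_left := by
    intros; rw [F.map_smul, M.actL_smul_left, M.cst_smul]
  actL_smul_right := by
    intros; rw [M.actL_smul_right, M.cst_smul]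
  actR_add_left := by
    intros; rw [M.actR_add_left, M.cst_add]
  actR_add_right := by
    intros; rw [F.map_add, M.actR_add_right, M.cst_add]
  actR_smul_left := by
    intros; rw [M.actR_smul_left, M.cst_smul]
  actR_smul_right := by
    intros; rw [F.map_smul, M.actR_smul_right, M.cst_smul]
  actL_id := by
    intro X Y g B A m
    exact (M.cst_heq _ _).trans
      ((M.actL_congr (φ.map_id _) rfl (F.map_id _) HEq.rfl).trans (M.actL_id m))
  actR_id := by
    intro X Y f B A m
    exact (M.cst_heq _ _).trans
      ((M.actR_congr rfl (φ.map_id _) HEq.rfl (F.map_id _)).trans (M.actR_id m))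
  actL_actL := by
    intro W X Y Z f' f g B A A' A'' x y m
    refine ((M.cst_heq _ _).trans ?_).trans (M.cst_heq _ _).symm
    refine ((M.actL_congr rfl (φ.map_comp _ _) HEq.rfl (M.cst_heq _ _)).trans
      (M.actL_actL _ _ _)).trans ?_
    exact M.actL_congr (φ.map_comp _ _).symm rfl (F.map_comp _ _).symm HEq.rfl
  actR_actR := by
    intro W X Y Z f g h B'' B' B A m y y'
    refine ((M.cst_heq _ _).trans ?_).trans (M.cst_heq _ _).symm
    refine ((M.actR_congr (φ.map_comp _ _) rfl (M.cst_heq _ _) HEq.rfl).trans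
      (M.actR_actR _ _ _)).trans ?_
    exact M.actR_congr rfl (φ.map_comp _ _).symm HEq.rfl (F.map_comp _ _).symm
  actL_actR := by
    intro W X Y Z f g h B' B A A' x m y
    refine ((M.cst_heq _ _).trans ?_).trans (M.cst_heq _ _).symm
    refine ((M.actL_congr rfl (φ.map_comp _ _) HEq.rfl (M.cst_heq _ _)).trans
      (M.actL_actR _ _ _)).trans ?_
    exact M.actR_congr (φ.map_comp _ _).symm rfl (M.cst_heq _ _).symm HEq.rfl

/-- The functor `𝒱^♯ ⥤ 𝒰^♯` induced by a graded functor. -/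
def sharpF {φ : 𝒱 ⥤ 𝒰} {𝔟 : GradedCat k 𝒱} {𝔞 : GradedCat k 𝒰}
    (F : GradedFunctor k φ 𝔟 𝔞) : Sh 𝔟 ⥤ Sh 𝔞 where
  obj X := ⟨φ.obj X.1, F.obj X.2⟩
  map {X Y} f := φ.map (Sh.base f)
  map_id X := φ.map_id X.1
  map_comp f g := φ.map_comp _ _

/-- The map induced by a graded functor on families of elements over simplices. -/
def eltsMap {φ : 𝒱 ⥤ 𝒰} {𝔟 : GradedCat k 𝒱} {𝔞 : GradedCat k 𝒰}
    (F : GradedFunctor k φ 𝔟 𝔞) :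
    ∀ {n : ℕ} {X Y : Sh 𝔟} {p : Pth (Sh 𝔟) n X Y},
      PthElts 𝔟 p → PthElts 𝔞 (p.map (sharpF F))
  | _, _, _, _, .nil X => .nil _
  | _, _, _, _, .cons x e => .cons (F.map _ x) (eltsMap F e)

/-- The module of raw Hochschild `n`-cochains of `(𝒰, 𝔞)` with values in an
`𝔞`-bimodule `M`: families, indexed by the `n`-simplices `(u, A)` of `𝒩(𝔞)`, of maps
`𝔞_{u_{n-1}} ⊗ ⋯ ⊗ 𝔞_{u_0} → M_{|u|}(A₀, Aₙ)` (multilinearity is the separate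
predicate `IsCochain`). -/
abbrev RawCochain {𝔞 : GradedCat k 𝒰} (M : Bimod k 𝔞) (n : ℕ) : Type u :=
  ∀ (X Y : Sh 𝔞) (p : Pth (Sh 𝔞) n X Y), PthElts 𝔞 p → M.M (Sh.base p.comp) X.2 Y.2

/-- Restriction of Hochschild cochains along a graded functor, with values in the
pullback bimodule: `(F*ψ)_{(v,B)} = ψ_{(φ v, F B)} ∘ F^{⊗n}`. -/
def Fstar {φ : 𝒱 ⥤ 𝒰} {𝔟 : GradedCat k 𝒱} {𝔞 : GradedCat k 𝒰}
    (F : GradedFunctor k φ 𝔟 𝔞) (M : Bimod k 𝔞) {n : ℕ} (c : RawCochain M n) :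
    RawCochain (Bimod.pullback F M) n :=
  fun X Y p e =>
    M.cst (by rw [Pth.comp_map]; rfl) (c _ _ (p.map (sharpF F)) (eltsMap F e))

/-- Restriction of Hochschild cochains (with values in the identity bimodules) along a
subcartesian graded functor: `(F*ψ)_{(v,B)} = F⁻¹ ∘ ψ_{(φ v, F B)} ∘ F^{⊗n}`. -/
noncomputable def FstarUnit {φ : 𝒱 ⥤ 𝒰} {𝔟 : GradedCat k 𝒱} {𝔞 : GradedCat k 𝒰}
    (F : GradedFunctor k φ 𝔟 𝔞) (hF : F.Subcartesian) {n : ℕ}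
    (c : RawCochain 𝔞.unit n) : RawCochain 𝔟.unit n :=
  fun X Y p e =>
    (Equiv.ofBijective _ (hF (Sh.base p.comp) X.2 Y.2)).symm
      ((𝔞.unit).cst (by rw [Pth.comp_map]; rfl) (c _ _ (p.map (sharpF F)) (eltsMap F e)))

section Multilinear

variable {𝔞 : GradedCat k 𝒰} (M : Bimod k 𝔞)

/-- The multilinearity predicate for (relative) Hochschild cochains: additivity and
`k`-homogeneity in the first slot, and, recursively, multilinearity of all partial
evaluations. -/
def IsML : ∀ {n : ℕ} {W : 𝒰} {B : 𝔞.Obj W} {Y : Sh 𝔞} {v : W ⟶ Y.1},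
    (∀ (Z : Sh 𝔞) (q : Pth (Sh 𝔞) n Y Z), PthElts 𝔞 q →
      M.M (v ≫ Sh.base q.comp) B Z.2) → Prop
  | 0, _, _, _, _, _ => True
  | n + 1, W, B, Y, v, c =>
      (∀ (Y' Z : Sh 𝔞) (a : Y ⟶ Y') (q : Pth (Sh 𝔞) n Y' Z) (e : PthElts 𝔞 q)
        (x x' : 𝔞.Hom (Sh.base a) Y.2 Y'.2),
        c Z (.cons a q) (.cons (x + x') e) =
          c Z (.cons a q) (.cons x e) + c Z (.cons a q) (.cons x' e)) ∧
      (∀ (Y' Z : Sh 𝔞) (a : Y ⟶ Y') (q : Pth (Sh 𝔞) n Y' Z) (e : PthElts 𝔞 q) (r : k)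
        (x : 𝔞.Hom (Sh.base a) Y.2 Y'.2),
        c Z (.cons a q) (.cons (r • x) e) = r • c Z (.cons a q) (.cons x e)) ∧
      (∀ (Y' : Sh 𝔞) (a : Y ⟶ Y') (x : 𝔞.Hom (Sh.base a) Y.2 Y'.2),
        IsML (v := v ≫ Sh.base a)
          (fun Z q e => M.cst (by simp) (c Z (.cons a q) (.cons x e))))

/-- A raw cochain, viewed as a relative cochain. -/
def toRel {n : ℕ} (c : RawCochain M n) (X : Sh 𝔞) :
    ∀ (Z : Sh 𝔞) (q : Pth (Sh 𝔞) n X Z), PthElts 𝔞 q →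
      M.M (𝟙 X.1 ≫ Sh.base q.comp) X.2 Z.2 :=
  fun Z q e => M.cst (by simp) (c X Z q e)

/-- A raw cochain is a genuine Hochschild cochain if it is multilinear. -/
def IsCochain {n : ℕ} (c : RawCochain M n) : Prop :=
  ∀ X : Sh 𝔞, IsML M (toRel M c X)

end Multilinear

section Differential

variable {𝔞 : GradedCat k 𝒰}

/-- The inductive core of the Hochschild differential: `χ` is the relative cochain with
the already-consumed prefix applied, and `G` records the evaluation with the last
morphism of the prefix composed into the first remaining slot (initially, the right
action on the source). -/
def hochD (M : Bimod k 𝔞) {W : 𝒰} (B : 𝔞.Obj W) :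
    ∀ {m : ℕ} {Y Z : Sh 𝔞} (v : W ⟶ Y.1)
      (χ : ∀ (Z' : Sh 𝔞) (q : Pth (Sh 𝔞) m Y Z'), PthElts 𝔞 q →
        M.M (v ≫ Sh.base q.comp) B Z'.2)
      (G : ∀ (Y' Z' : Sh 𝔞) (c : Y ⟶ Y') (z : 𝔞.Hom (Sh.base c) Y.2 Y'.2)
        (q : Pth (Sh 𝔞) m Y' Z'), PthElts 𝔞 q →
        M.M (v ≫ (Sh.base c ≫ Sh.base q.comp)) B Z'.2)
      (p : Pth (Sh 𝔞) (m + 1) Y Z) (e : PthElts 𝔞 p),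
      M.M (v ≫ Sh.base p.comp) B Z.2
  | 0, Y, Z, v, χ, G, .cons a (.nil _), .cons x e' =>
      G _ _ a x (.nil _) e' - M.cst (by simp) (M.actL x (χ _ (.nil _) (.nil _)))
  | m + 1, Y, Z, v, χ, G, .cons a q, .cons x e' =>
      G _ _ a x q e' -
        M.cst (by simp)
          (hochD M B (v ≫ Sh.base a)
            (fun Z' r er => M.cst (by simp) (χ Z' (.cons a r) (.cons x er)))
            (fun Y'' Z' c z r er =>
              M.cst (by simp) (χ Z' (.cons (a ≫ c) r) (.cons (𝔞.comp z x) er)))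
            q e')

/-- The simplicial Hochschild differential on raw cochains. -/
def dRaw (M : Bimod k 𝔞) {n : ℕ} (c : RawCochain M n) : RawCochain M (n + 1) :=
  fun X Z p e =>
    M.cst (by simp)
      (hochD M X.2 (𝟙 X.1)
        (fun Z' q eq => M.cst (by simp) (c X Z' q eq))
        (fun Y' Z' a z q eq => M.cst (by simp) (M.actR (c Y' Z' q eq) z))
        p e)

end Differential

end MapGr

namespace MapGr

variable {k : Type u} [CommRing k]
variable {𝒰 : Type u} [Category.{u} 𝒰]

/-- A subcategory of `𝒰`: a class of objects and a class of morphisms, closed under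
identities and composition. -/
structure Subcat (𝒰 : Type u) [Category.{u} 𝒰] where
  objs : 𝒰 → Prop
  homs : ∀ {X Y : 𝒰}, (X ⟶ Y) → Prop
  dom_mem : ∀ {X Y : 𝒰} (f : X ⟶ Y), homs f → objs X
  cod_mem : ∀ {X Y : 𝒰} (f : X ⟶ Y), homs f → objs Y
  id_mem : ∀ X : 𝒰, objs X → homs (𝟙 X)
  comp_mem : ∀ {X Y Z : 𝒰} (f : X ⟶ Y) (g : Y ⟶ Z), homs f → homs g → homs (f ≫ g)

/-- The category carried by a subcategory. -/
def Subcat.Cat (𝒮 : Subcat 𝒰) : Type u := { X : 𝒰 // 𝒮.objs X }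

instance (𝒮 : Subcat 𝒰) : Category.{u} 𝒮.Cat where
  Hom A B := { f : A.1 ⟶ B.1 // 𝒮.homs f }
  id A := ⟨𝟙 A.1, 𝒮.id_mem A.1 A.2⟩
  comp f g := ⟨f.1 ≫ g.1, 𝒮.comp_mem _ _ f.2 g.2⟩
  id_comp f := by apply Subtype.ext; simp
  comp_id f := by apply Subtype.ext; simp
  assoc f g h := by apply Subtype.ext; simp

/-- The inclusion functor of a subcategory. -/
def Subcat.incl (𝒮 : Subcat 𝒰) : 𝒮.Cat ⥤ 𝒰 where
  obj A := A.1
  map f := f.1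
  map_id _ := rfl
  map_comp _ _ := rfl

/-- The intersection `𝒱₁ ∩ 𝒱₂` of two subcategories. -/
def Subcat.inter (𝒮 𝒯 : Subcat 𝒰) : Subcat 𝒰 where
  objs X := 𝒮.objs X ∧ 𝒯.objs X
  homs f := 𝒮.homs f ∧ 𝒯.homs f
  dom_mem f h := ⟨𝒮.dom_mem f h.1, 𝒯.dom_mem f h.2⟩
  cod_mem f h := ⟨𝒮.cod_mem f h.1, 𝒯.cod_mem f h.2⟩
  id_mem X h := ⟨𝒮.id_mem X h.1, 𝒯.id_mem X h.2⟩
  comp_mem f g h h' := ⟨𝒮.comp_mem f g h.1 h'.1, 𝒯.comp_mem f g h.2 h'.2⟩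

/-- The inclusion `𝒱₁ ∩ 𝒱₂ ⊆ 𝒱₁`. -/
def Subcat.interFst (𝒮 𝒯 : Subcat 𝒰) : (𝒮.inter 𝒯).Cat ⥤ 𝒮.Cat where
  obj A := ⟨A.1, A.2.1⟩
  map f := ⟨f.1, f.2.1⟩
  map_id _ := rfl
  map_comp _ _ := rfl

/-- The inclusion `𝒱₁ ∩ 𝒱₂ ⊆ 𝒱₂`. -/
def Subcat.interSnd (𝒮 𝒯 : Subcat 𝒰) : (𝒮.inter 𝒯).Cat ⥤ 𝒯.Cat where
  obj A := ⟨A.1, A.2.2⟩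
  map f := ⟨f.1, f.2.2⟩
  map_id _ := rfl
  map_comp _ _ := rfl

/-- The canonical (cartesian) graded functor
`(𝒱₁ ∩ 𝒱₂, 𝔞^φ) → (𝒱₁, 𝔞^{φ₁})` over the inclusion `𝒱₁ ∩ 𝒱₂ ⊆ 𝒱₁`. -/
def interRes₁ (𝒮 𝒯 : Subcat 𝒰) (𝔞 : GradedCat k 𝒰) :
    GradedFunctor k (Subcat.interFst 𝒮 𝒯) (𝔞.restrict (𝒮.inter 𝒯).incl)
      (𝔞.restrict 𝒮.incl) where
  obj {V} B := B
  map := fun {V V'} _f {B B'} x => x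
  map_add := by intros; rfl
  map_smul := by intros; rfl
  map_id := by
    intro V B
    exact (𝔞.Hcast_heq ((𝒮.inter 𝒯).incl.map_id V).symm (𝔞.id B)).trans
      (𝔞.Hcast_heq (𝒮.incl.map_id ((Subcat.interFst 𝒮 𝒯).obj V)).symm (𝔞.id B)).symm
  map_comp := by
    intro V V' V'' f g C B A x y
    exact (𝔞.Hcast_heq ((𝒮.inter 𝒯).incl.map_comp g f).symm (𝔞.comp x y)).trans
      (𝔞.Hcast_heq (𝒮.incl.map_comp ((Subcat.interFst 𝒮 𝒯).map g)
        ((Subcat.interFst 𝒮 𝒯).map f)).symm (𝔞.comp x y)).symm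

/-- The canonical (cartesian) graded functor
`(𝒱₁ ∩ 𝒱₂, 𝔞^φ) → (𝒱₂, 𝔞^{φ₂})` over the inclusion `𝒱₁ ∩ 𝒱₂ ⊆ 𝒱₂`. -/
def interRes₂ (𝒮 𝒯 : Subcat 𝒰) (𝔞 : GradedCat k 𝒰) :
    GradedFunctor k (Subcat.interSnd 𝒮 𝒯) (𝔞.restrict (𝒮.inter 𝒯).incl)
      (𝔞.restrict 𝒯.incl) where
  obj {V} B := B
  map := fun {V V'} _f {B B'} x => x
  map_add := by intros; rfl
  map_smul := by intros; rfl
  map_id := by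
    intro V B
    exact (𝔞.Hcast_heq ((𝒮.inter 𝒯).incl.map_id V).symm (𝔞.id B)).trans
      (𝔞.Hcast_heq (𝒯.incl.map_id ((Subcat.interSnd 𝒮 𝒯).obj V)).symm (𝔞.id B)).symm
  map_comp := by
    intro V V' V'' f g C B A x y
    exact (𝔞.Hcast_heq ((𝒮.inter 𝒯).incl.map_comp g f).symm (𝔞.comp x y)).trans
      (𝔞.Hcast_heq (𝒯.incl.map_comp ((Subcat.interSnd 𝒮 𝒯).map g)
        ((Subcat.interSnd 𝒮 𝒯).map f)).symm (𝔞.comp x y)).symm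

theorem interRes₁_subcartesian (𝒮 𝒯 : Subcat 𝒰) (𝔞 : GradedCat k 𝒰) :
    (interRes₁ 𝒮 𝒯 𝔞).Subcartesian := by
  intro V V' f B B'
  exact ⟨fun a b h => h, fun y => ⟨y, rfl⟩⟩

theorem interRes₂_subcartesian (𝒮 𝒯 : Subcat 𝒰) (𝔞 : GradedCat k 𝒰) :
    (interRes₂ 𝒮 𝒯 𝔞).Subcartesian := by
  intro V V' f B B'
  exact ⟨fun a b h => h, fun y => ⟨y, rfl⟩⟩

end MapGr

namespace MapGr

variable {k : Type u} [CommRing k]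
variable {𝒰 : Type u} [Category.{u} 𝒰]

/-- A (two-sided) ideal in a category `𝒰`: a class of morphisms stable under pre- and
post-composition with arbitrary morphisms of `𝒰`. -/
structure CatIdeal (𝒰 : Type u) [Category.{u} 𝒰] where
  mem : ∀ {X Y : 𝒰}, (X ⟶ Y) → Prop
  comp_left : ∀ {X Y Z : 𝒰} (f : X ⟶ Y) (g : Y ⟶ Z), mem g → mem (f ≫ g)
  comp_right : ∀ {X Y Z : 𝒰} (f : X ⟶ Y) (g : Y ⟶ Z), mem f → mem (f ≫ g)

namespace Bimod

variable {𝔞 : GradedCat k 𝒰} (M : Bimod k 𝔞)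

theorem actL_zero {X Y Z : 𝒰} {f : Y ⟶ Z} {g : X ⟶ Y} {B : 𝔞.Obj X} {A : 𝔞.Obj Y}
    {A' : 𝔞.Obj Z} (x : 𝔞.Hom f A A') : M.actL x (0 : M.M g B A) = 0 := by
  have h := M.actL_add_right x (0 : M.M g B A) 0
  rw [add_zero] at h
  exact left_eq_add.mp h

theorem actR_zero {X Y Z : 𝒰} {f : Y ⟶ Z} {g : X ⟶ Y} {B' : 𝔞.Obj X} {B : 𝔞.Obj Y}
    {A : 𝔞.Obj Z} (y : 𝔞.Hom g B' B) : M.actR (0 : M.M f B A) y = 0 := by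
  have h := M.actR_add_left (0 : M.M f B A) 0 y
  rw [add_zero] at h
  exact left_eq_add.mp h

/-- The left action, as a `k`-linear map. -/
def actLlin {X Y Z : 𝒰} {f : Y ⟶ Z} {g : X ⟶ Y} {B : 𝔞.Obj X} {A : 𝔞.Obj Y}
    {A' : 𝔞.Obj Z} (x : 𝔞.Hom f A A') : M.M g B A →ₗ[k] M.M (g ≫ f) B A' where
  toFun := M.actL x
  map_add' := M.actL_add_right x
  map_smul' r m := M.actL_smul_right r x m

/-- The right action, as a `k`-linear map. -/
def actRlin {X Y Z : 𝒰} {f : Y ⟶ Z} {g : X ⟶ Y} {B' : 𝔞.Obj X} {B : 𝔞.Obj Y}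
    {A : 𝔞.Obj Z} (y : 𝔞.Hom g B' B) : M.M f B A →ₗ[k] M.M (g ≫ f) B' A where
  toFun m := M.actR m y
  map_add' m m' := M.actR_add_left m m' y
  map_smul' r m := M.actR_smul_left r m y

open Classical in
/-- The `𝒵`-part of the values of `M`: all of `M_u` if `u ∈ 𝒵`, and `0` otherwise. -/
noncomputable def zSub (Z : CatIdeal 𝒰) {X Y : 𝒰} (f : X ⟶ Y) (B : 𝔞.Obj X)
    (A : 𝔞.Obj Y) : Submodule k (M.M f B A) :=
  if Z.mem f then ⊤ else ⊥

theorem zSub_actL_le (Z : CatIdeal 𝒰) {X Y Z' : 𝒰} {f : Y ⟶ Z'} {g : X ⟶ Y}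
    {B : 𝔞.Obj X} {A : 𝔞.Obj Y} {A' : 𝔞.Obj Z'} (x : 𝔞.Hom f A A') :
    ∀ m ∈ M.zSub Z g B A, M.actL x m ∈ M.zSub Z (g ≫ f) B A' := by
  intro m hm
  by_cases h : Z.mem g
  · simp [zSub, Z.comp_right g f h]
  · have hm0 : m = 0 := by simpa [zSub, h] using hm
    rw [hm0, M.actL_zero]
    exact Submodule.zero_mem _

theorem zSub_actR_le (Z : CatIdeal 𝒰) {X Y Z' : 𝒰} {f : Y ⟶ Z'} {g : X ⟶ Y}
    {B' : 𝔞.Obj X} {B : 𝔞.Obj Y} {A : 𝔞.Obj Z'} (y : 𝔞.Hom g B' B) :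
    ∀ m ∈ M.zSub Z f B A, M.actR m y ∈ M.zSub Z (g ≫ f) B' A := by
  intro m hm
  by_cases h : Z.mem f
  · simp [zSub, Z.comp_left g f h]
  · have hm0 : m = 0 := by simpa [zSub, h] using hm
    rw [hm0, M.actR_zero]
    exact Submodule.zero_mem _

theorem zheq (Z : CatIdeal 𝒰) {X Y : 𝒰} {f g : X ⟶ Y} (hfg : f = g) {B : 𝔞.Obj X}
    {A : 𝔞.Obj Y} {x : ↥(M.zSub Z f B A)} {y : ↥(M.zSub Z g B A)}
    (h : HEq x.1 y.1) : HEq x y := by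
  subst hfg
  exact heq_of_eq (Subtype.ext (eq_of_heq h))

/-- The sub-bimodule `M_𝒵 ⊆ M` supported on an ideal `𝒵`. -/
noncomputable def subBimod (Z : CatIdeal 𝒰) : Bimod k 𝔞 where
  M f B A := ModuleCat.of k ↥(M.zSub Z f B A)
  actL x m := ⟨M.actL x m.1, M.zSub_actL_le Z x m.1 m.2⟩
  actR m y := ⟨M.actR m.1 y, M.zSub_actR_le Z y m.1 m.2⟩
  actL_add_left := by
    intro X Y Z' f g B A A' x x' m
    exact Subtype.ext (M.actL_add_left x x' m.1)
  actL_add_right := by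
    intro X Y Z' f g B A A' x m m'
    exact Subtype.ext (M.actL_add_right x m.1 m'.1)
  actL_smul_left := by
    intro X Y Z' f g B A A' r x m
    exact Subtype.ext (M.actL_smul_left r x m.1)
  actL_smul_right := by
    intro X Y Z' f g B A A' r x m
    exact Subtype.ext (M.actL_smul_right r x m.1)
  actR_add_left := by
    intro X Y Z' f g B' B A m m' y
    exact Subtype.ext (M.actR_add_left m.1 m'.1 y)
  actR_add_right := by
    intro X Y Z' f g B' B A m y y'
    exact Subtype.ext (M.actR_add_right m.1 y y')
  actR_smul_left := by
    intro X Y Z' f g B' B A r m y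
    exact Subtype.ext (M.actR_smul_left r m.1 y)
  actR_smul_right := by
    intro X Y Z' f g B' B A r m y
    exact Subtype.ext (M.actR_smul_right r m.1 y)
  actL_id := by
    intro X Y g B A m
    exact M.zheq Z (Category.comp_id g) (M.actL_id m.1)
  actR_id := by
    intro X Y f B A m
    exact M.zheq Z (Category.id_comp f) (M.actR_id m.1)
  actL_actL := by
    intro W X Y Z' f' f g B A A' A'' x y m
    exact M.zheq Z (by simp) (M.actL_actL x y m.1)
  actR_actR := by
    intro W X Y Z' f g h B'' B' B A m y y'
    exact M.zheq Z (by simp) (M.actR_actR m.1 y y')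
  actL_actR := by
    intro W X Y Z' f g h B' B A A' x m y
    exact M.zheq Z (by simp) (M.actL_actR x m.1 y)

theorem quot_heq (Z : CatIdeal 𝒰) {X Y : 𝒰} {f g : X ⟶ Y} (hfg : f = g) {B : 𝔞.Obj X}
    {A : 𝔞.Obj Y} {m : M.M f B A} {m' : M.M g B A} (h : HEq m m') :
    HEq (Submodule.Quotient.mk (p := M.zSub Z f B A) m)
      (Submodule.Quotient.mk (p := M.zSub Z g B A) m') := by
  subst hfg
  rw [eq_of_heq h]

/-- The quotient bimodule `M_𝒱 = M / M_𝒵`: its values are `M_u` for `u ∈ 𝒱` and `0`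
for `u ∈ 𝒵`. -/
noncomputable def quotBimod (Z : CatIdeal 𝒰) : Bimod k 𝔞 where
  M f B A := ModuleCat.of k (M.M f B A ⧸ M.zSub Z f B A)
  actL x m := Submodule.mapQ _ _ (M.actLlin x) (M.zSub_actL_le Z x) m
  actR m y := Submodule.mapQ _ _ (M.actRlin y) (M.zSub_actR_le Z y) m
  actL_add_left := by
    intro X Y Z' f g B A A' x x' m
    obtain ⟨m, rfl⟩ := Submodule.Quotient.mk_surjective _ m
    dsimp only
    show Submodule.Quotient.mk (M.actL (x + x') m) = _
    rw [M.actL_add_left]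
    rfl
  actL_add_right := by
    intro X Y Z' f g B A A' x m m'
    exact map_add _ m m'
  actL_smul_left := by
    intro X Y Z' f g B A A' r x m
    obtain ⟨m, rfl⟩ := Submodule.Quotient.mk_surjective _ m
    dsimp only
    show Submodule.Quotient.mk (M.actL (r • x) m) = _
    rw [M.actL_smul_left]
    rfl
  actL_smul_right := by
    intro X Y Z' f g B A A' r x m
    exact map_smul _ r m
  actR_add_left := by
    intro X Y Z' f g B' B A m m' y
    exact map_add _ m m'
  actR_add_right := by
    intro X Y Z' f g B' B A m y y'
    obtain ⟨m, rfl⟩ := Submodule.Quotient.mk_surjective _ m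
    dsimp only
    show Submodule.Quotient.mk (M.actR m (y + y')) = _
    rw [M.actR_add_right]
    rfl
  actR_smul_left := by
    intro X Y Z' f g B' B A r m y
    exact map_smul _ r m
  actR_smul_right := by
    intro X Y Z' f g B' B A r m y
    obtain ⟨m, rfl⟩ := Submodule.Quotient.mk_surjective _ m
    dsimp only
    show Submodule.Quotient.mk (M.actR m (r • y)) = _
    rw [M.actR_smul_right]
    rfl
  actL_id := by
    intro X Y g B A m
    obtain ⟨m, rfl⟩ := Submodule.Quotient.mk_surjective _ m
    dsimp only
    exact M.quot_heq Z (Category.comp_id g) (M.actL_id m)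
  actR_id := by
    intro X Y f B A m
    obtain ⟨m, rfl⟩ := Submodule.Quotient.mk_surjective _ m
    dsimp only
    exact M.quot_heq Z (Category.id_comp f) (M.actR_id m)
  actL_actL := by
    intro W X Y Z' f' f g B A A' A'' x y m
    obtain ⟨m, rfl⟩ := Submodule.Quotient.mk_surjective _ m
    dsimp only
    exact M.quot_heq Z (by simp) (M.actL_actL x y m)
  actR_actR := by
    intro W X Y Z' f g h B'' B' B A m y y'
    obtain ⟨m, rfl⟩ := Submodule.Quotient.mk_surjective _ m
    dsimp only
    exact M.quot_heq Z (by simp) (M.actR_actR m y y')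
  actL_actR := by
    intro W X Y Z' f g h B' B A A' x m y
    obtain ⟨m, rfl⟩ := Submodule.Quotient.mk_surjective _ m
    dsimp only
    exact M.quot_heq Z (by simp) (M.actL_actR x m y)

end Bimod

/-- The canonical inclusion `C_𝒰(𝔞, M_𝒵) → C_𝒰(𝔞, M)` on raw cochains. -/
noncomputable def subInto {𝔞 : GradedCat k 𝒰} (M : Bimod k 𝔞) (Z : CatIdeal 𝒰) {n : ℕ}
    (c : RawCochain (M.subBimod Z) n) : RawCochain M n :=
  fun X Y p e => (c X Y p e).1

/-- The canonical projection `C_𝒰(𝔞, M) → C_𝒰(𝔞, M_𝒱)` on raw cochains. -/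
noncomputable def quotOnto {𝔞 : GradedCat k 𝒰} (M : Bimod k 𝔞) (Z : CatIdeal 𝒰) {n : ℕ}
    (c : RawCochain M n) : RawCochain (M.quotBimod Z) n :=
  fun X Y p e => Submodule.Quotient.mk (c X Y p e)

end MapGr

/-! Since `𝒵` is an ideal and `𝒱` consists of the morphisms outside it, the composite of a
string of composable morphisms lies outside `𝒵` exactly when every morphism of the string lies
in `𝒱`. So `φ*` only sees the values of a cochain over `𝒱`, where `M_𝒵` vanishes and
`M_𝒱 = M`: the kernel of `φ*` consists of the cochains with values in `M_𝒵`, and `φ*` factors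
through an injection `C_𝒰(𝔞, M_𝒱) → C_𝒱(𝔟, M^φ)`. Extension by zero of a cochain on `𝒱` is
still multilinear, which gives surjectivity of `φ*` and of that injection. The sequence
`0 → M_𝒵 → M → M_𝒱 → 0` splits degreewise as `k`-modules, so it stays exact on cochains, and
maps of bimodules commute with the Hochschild differential. -/

namespace MapGr

variable {k : Type u} [CommRing k] {𝒰 : Type u} [Category.{u} 𝒰] {𝔞 : GradedCat k 𝒰}

namespace Bimod

variable (M : Bimod k 𝔞)

theorem cst_eq_zero_iff {X Y : 𝒰} {f g : X ⟶ Y} (h : f = g) {B : 𝔞.Obj X}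
    {A : 𝔞.Obj Y} {m : M.M f B A} : M.cst h m = 0 ↔ m = 0 := by
  subst h; rfl

theorem cst_zero {X Y : 𝒰} {f g : X ⟶ Y} (h : f = g) {B : 𝔞.Obj X} {A : 𝔞.Obj Y} :
    M.cst h (0 : M.M f B A) = 0 :=
  (M.cst_eq_zero_iff h).2 rfl

abbrev LinFamily (M N : Bimod k 𝔞) : Type u :=
  ∀ {X Y : 𝒰} {f : X ⟶ Y} {B : 𝔞.Obj X} {A : 𝔞.Obj Y}, M.M f B A →ₗ[k] N.M f B A

variable {M} {N : Bimod k 𝔞}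

theorem LinFamily.map_cst (τ : M.LinFamily N) {X Y : 𝒰} {f g : X ⟶ Y} (h : f = g)
    {B : 𝔞.Obj X} {A : 𝔞.Obj Y} (m : M.M f B A) : τ (M.cst h m) = N.cst h (τ m) := by
  subst h; rfl

end Bimod

section LinearFamilies

variable {M N : Bimod k 𝔞}

theorem isML_zero (M : Bimod k 𝔞) :
    ∀ (m : ℕ) {W : 𝒰} {B : 𝔞.Obj W} {Y : Sh 𝔞} {v : W ⟶ Y.1},
      IsML M (fun (Z : Sh 𝔞) (q : Pth (Sh 𝔞) m Y Z) (_ : PthElts 𝔞 q) =>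
        (0 : M.M (v ≫ Sh.base q.comp) B Z.2))
  | 0, _, _, _, _ => trivial
  | m + 1, _, _, _, _ =>
    ⟨fun _ _ _ _ _ _ _ => (add_zero _).symm, fun _ _ _ _ _ r _ => (smul_zero r).symm,
      fun _ _ _ => by
        convert isML_zero M m using 4
        exact M.cst_zero _⟩

theorem isML_map (τ : M.LinFamily N) :
    ∀ {m : ℕ} {W : 𝒰} {B : 𝔞.Obj W} {Y : Sh 𝔞} {v : W ⟶ Y.1}
      {c : ∀ (Z : Sh 𝔞) (q : Pth (Sh 𝔞) m Y Z), PthElts 𝔞 q →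
        M.M (v ≫ Sh.base q.comp) B Z.2},
      IsML M c → IsML N (fun Z q e => τ (c Z q e))
  | 0, _, _, _, _, _, _ => trivial
  | _ + 1, _, _, _, _, _, ⟨hadd, hsmul, hrec⟩ =>
    ⟨fun _ _ _ _ _ _ _ => by simp only [hadd, map_add],
      fun _ _ _ _ _ _ _ => by simp only [hsmul, map_smul],
      fun Y' a x => by
        convert isML_map τ (hrec Y' a x) using 4
        exact (τ.map_cst _ _).symm⟩

theorem isML_of_map (τ : M.LinFamily N)
    (hτ : ∀ {X Y : 𝒰} {f : X ⟶ Y} {B : 𝔞.Obj X} {A : 𝔞.Obj Y} {m m' : M.M f B A},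
      τ m = τ m' → m = m') :
    ∀ {m : ℕ} {W : 𝒰} {B : 𝔞.Obj W} {Y : Sh 𝔞} {v : W ⟶ Y.1}
      {c : ∀ (Z : Sh 𝔞) (q : Pth (Sh 𝔞) m Y Z), PthElts 𝔞 q →
        M.M (v ≫ Sh.base q.comp) B Z.2},
      IsML N (fun Z q e => τ (c Z q e)) → IsML M c
  | 0, _, _, _, _, _, _ => trivial
  | _ + 1, _, _, _, _, _, ⟨hadd, hsmul, hrec⟩ =>
    ⟨fun _ _ _ _ _ _ _ => hτ (by simp only [hadd, map_add]),
      fun _ _ _ _ _ _ _ => hτ (by simp only [hsmul, map_smul]),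
      fun Y' a x => isML_of_map τ hτ (by
        convert hrec Y' a x using 4
        exact τ.map_cst _ _)⟩

theorem hochD_map (τ : M.LinFamily N)
    (hτ : ∀ {X Y Z : 𝒰} {f : Y ⟶ Z} {g : X ⟶ Y} {B : 𝔞.Obj X} {A : 𝔞.Obj Y}
      {A' : 𝔞.Obj Z} (x : 𝔞.Hom f A A') (m : M.M g B A), τ (M.actL x m) = N.actL x (τ m))
    {W : 𝒰} (B : 𝔞.Obj W) :
    ∀ {m : ℕ} {Y Z : Sh 𝔞} (v : W ⟶ Y.1)
      (χ : ∀ (Z' : Sh 𝔞) (q : Pth (Sh 𝔞) m Y Z'), PthElts 𝔞 q →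
        M.M (v ≫ Sh.base q.comp) B Z'.2)
      (G : ∀ (Y' Z' : Sh 𝔞) (c : Y ⟶ Y'), 𝔞.Hom (Sh.base c) Y.2 Y'.2 →
        ∀ q : Pth (Sh 𝔞) m Y' Z', PthElts 𝔞 q →
        M.M (v ≫ (Sh.base c ≫ Sh.base q.comp)) B Z'.2)
      (p : Pth (Sh 𝔞) (m + 1) Y Z) (e : PthElts 𝔞 p),
      τ (hochD M B v χ G p e) =
        hochD N B v (fun Z' q e => τ (χ Z' q e)) (fun Y' Z' c z q e => τ (G Y' Z' c z q e))
          p e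
  | 0, _, _, _, _, _, .cons _ (.nil _), .cons _ _ => by
    erw [hochD, map_sub, τ.map_cst, hτ]
    rfl
  | _ + 1, _, _, _, _, _, .cons _ _, .cons _ _ => by
    erw [hochD, map_sub, τ.map_cst, hochD_map τ hτ B]
    congr 4 <;> funext <;> exact τ.map_cst _ _

def mapRaw (τ : M.LinFamily N) {n : ℕ} (c : RawCochain M n) : RawCochain N n :=
  fun X Y p e => τ (c X Y p e)

theorem dRaw_map (τ : M.LinFamily N)
    (hL : ∀ {X Y Z : 𝒰} {f : Y ⟶ Z} {g : X ⟶ Y} {B : 𝔞.Obj X} {A : 𝔞.Obj Y}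
      {A' : 𝔞.Obj Z} (x : 𝔞.Hom f A A') (m : M.M g B A), τ (M.actL x m) = N.actL x (τ m))
    (hR : ∀ {X Y Z : 𝒰} {f : Y ⟶ Z} {g : X ⟶ Y} {B' : 𝔞.Obj X} {B : 𝔞.Obj Y}
      {A : 𝔞.Obj Z} (m : M.M f B A) (y : 𝔞.Hom g B' B), τ (M.actR m y) = N.actR (τ m) y)
    {n : ℕ} (c : RawCochain M n) : mapRaw τ (dRaw M c) = dRaw N (mapRaw τ c) := by
  funext X Y p e
  simp only [mapRaw, dRaw, τ.map_cst, hochD_map τ hL, hR]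

theorem IsCochain.map (τ : M.LinFamily N) {n : ℕ} {c : RawCochain M n}
    (hc : IsCochain M c) : IsCochain N (mapRaw τ c) := fun X => by
  convert isML_map τ (hc X) using 4
  exact (τ.map_cst _ _).symm

theorem IsCochain.of_map (τ : M.LinFamily N)
    (hτ : ∀ {X Y : 𝒰} {f : X ⟶ Y} {B : 𝔞.Obj X} {A : 𝔞.Obj Y} {m m' : M.M f B A},
      τ m = τ m' → m = m')
    {n : ℕ} {c : RawCochain M n} (hc : IsCochain N (mapRaw τ c)) : IsCochain M c := fun X =>
  isML_of_map τ hτ (by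
    convert hc X using 4
    exact τ.map_cst _ _)

end LinearFamilies

namespace Bimod

variable (M : Bimod k 𝔞) (Z : CatIdeal 𝒰)

theorem zSub_eq_top {X Y : 𝒰} {f : X ⟶ Y} (hf : Z.mem f) {B : 𝔞.Obj X} {A : 𝔞.Obj Y} :
    M.zSub Z f B A = ⊤ :=
  if_pos hf

theorem zSub_eq_bot {X Y : 𝒰} {f : X ⟶ Y} (hf : ¬ Z.mem f) {B : 𝔞.Obj X}
    {A : 𝔞.Obj Y} : M.zSub Z f B A = ⊥ :=
  if_neg hf

noncomputable def subι : (M.subBimod Z).LinFamily M := (M.zSub Z _ _ _).subtype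

noncomputable def quotπ : M.LinFamily (M.quotBimod Z) := (M.zSub Z _ _ _).mkQ

open Classical in
/-- A degreewise splitting of `M → M_𝒱`; it is not a map of bimodules. -/
noncomputable def quotSection : (M.quotBimod Z).LinFamily M := fun {_ _ f B A} =>
  if hf : Z.mem f then 0 else
    show (M.quotBimod Z).M f B A →ₗ[k] M.M f B A from
      (Submodule.quotEquivOfEqBot _ (M.zSub_eq_bot Z hf)).toLinearMap

theorem subsingleton_quot {X Y : 𝒰} {f : X ⟶ Y} (hf : Z.mem f) {B : 𝔞.Obj X}
    {A : 𝔞.Obj Y} : Subsingleton ((M.quotBimod Z).M f B A) :=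
  Submodule.Quotient.subsingleton_iff.2 (M.zSub_eq_top Z hf)

theorem quotSection_quotπ {X Y : 𝒰} {f : X ⟶ Y} (hf : ¬ Z.mem f) {B : 𝔞.Obj X}
    {A : 𝔞.Obj Y} (m : M.M f B A) : M.quotSection Z (M.quotπ Z m) = m := by
  rw [quotSection, dif_neg hf]
  rfl

theorem quotπ_quotSection {X Y : 𝒰} {f : X ⟶ Y} {B : 𝔞.Obj X} {A : 𝔞.Obj Y}
    (m : (M.quotBimod Z).M f B A) : M.quotπ Z (M.quotSection Z m) = m := by
  by_cases hf : Z.mem f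
  · have := M.subsingleton_quot Z hf (B := B) (A := A)
    exact Subsingleton.elim _ _
  · obtain ⟨m, rfl⟩ := Submodule.mkQ_surjective _ m
    exact congrArg _ (M.quotSection_quotπ Z hf m)

end Bimod

section IdealFiltration

variable (M : Bimod k 𝔞) (Z : CatIdeal 𝒰) {n : ℕ}

theorem subInto_dRaw (d : RawCochain (M.subBimod Z) n) :
    subInto M Z (dRaw (M.subBimod Z) d) = dRaw M (subInto M Z d) :=
  dRaw_map (M.subι Z) (fun _ _ => rfl) (fun _ _ => rfl) d

theorem quotOnto_dRaw (c : RawCochain M n) :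
    quotOnto M Z (dRaw M c) = dRaw (M.quotBimod Z) (quotOnto M Z c) :=
  dRaw_map (M.quotπ Z) (fun _ _ => rfl) (fun _ _ => rfl) c

theorem subInto_injective : Function.Injective (subInto M Z (n := n)) := fun _ _ h =>
  funext fun X => funext fun Y => funext fun p => funext fun e =>
    Subtype.ext (congrFun (congrFun (congrFun (congrFun h X) Y) p) e)

variable {M Z}

theorem IsCochain.subInto {d : RawCochain (M.subBimod Z) n}
    (hd : IsCochain (M.subBimod Z) d) : IsCochain M (subInto M Z d) :=
  hd.map (M.subι Z)

theorem IsCochain.quotOnto {c : RawCochain M n} (hc : IsCochain M c) :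
    IsCochain (M.quotBimod Z) (quotOnto M Z c) :=
  hc.map (M.quotπ Z)

theorem exists_subInto_eq_iff {c : RawCochain M n} (hc : IsCochain M c) :
    (∃ d, IsCochain (M.subBimod Z) d ∧ subInto M Z d = c) ↔
      ∀ X Y p e, c X Y p e ∈ M.zSub Z (Sh.base p.comp) X.2 Y.2 := by
  refine ⟨fun ⟨d, _, hd⟩ X Y p e => hd ▸ (d X Y p e).2, fun hmem => ?_⟩
  refine ⟨fun X Y p e => ⟨c X Y p e, hmem X Y p e⟩, ?_, rfl⟩
  exact IsCochain.of_map (M.subι Z) Subtype.ext hc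

theorem quotOnto_eq_zero_iff {c : RawCochain M n} :
    quotOnto M Z c = 0 ↔ ∀ X Y p e, c X Y p e ∈ M.zSub Z (Sh.base p.comp) X.2 Y.2 := by
  simp only [funext_iff]
  exact forall₄_congr fun X Y p e => Submodule.Quotient.mk_eq_zero _

theorem quotOnto_mapRaw_quotSection (c : RawCochain (M.quotBimod Z) n) :
    quotOnto M Z (mapRaw (M.quotSection Z) c) = c :=
  funext fun _ => funext fun _ => funext fun _ => funext fun _ => M.quotπ_quotSection Z _

end IdealFiltration

section Restriction

variable (𝒮 : Subcat 𝒰)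

def Pth.HomsIn : ∀ {n : ℕ} {X Y : Sh 𝔞}, Pth (Sh 𝔞) n X Y → Prop
  | _, _, _, .nil _ => True
  | _, _, _, .cons f p => 𝒮.homs (Sh.base f) ∧ p.HomsIn

variable (𝔞) in
def Sh.toRestrict (X : Sh 𝔞) (hX : 𝒮.objs X.1) : Sh (𝔞.restrict 𝒮.incl) :=
  ⟨⟨X.1, hX⟩, X.2⟩

def Pth.toRestrict : ∀ {n : ℕ} {X Y : Sh 𝔞} (p : Pth (Sh 𝔞) n X Y), p.HomsIn 𝒮 →
    ∀ (hX : 𝒮.objs X.1) (hY : 𝒮.objs Y.1),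
      Pth (Sh (𝔞.restrict 𝒮.incl)) n (Sh.toRestrict 𝔞 𝒮 X hX) (Sh.toRestrict 𝔞 𝒮 Y hY)
  | _, _, _, .nil _, _, _, _ => .nil _
  | _, _, _, .cons f p, hp, _, hY =>
      .cons (Y := Sh.toRestrict 𝔞 𝒮 _ (𝒮.cod_mem _ hp.1)) ⟨Sh.base f, hp.1⟩
        (p.toRestrict hp.2 _ hY)

def PthElts.toRestrict : ∀ {n : ℕ} {X Y : Sh 𝔞} {p : Pth (Sh 𝔞) n X Y} (hp : p.HomsIn 𝒮)
    (hX : 𝒮.objs X.1) (hY : 𝒮.objs Y.1), PthElts 𝔞 p →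
      PthElts (𝔞.restrict 𝒮.incl) (p.toRestrict 𝒮 hp hX hY)
  | _, _, _, _, _, _, _, .nil _ => .nil _
  | _, _, _, _, hp, _, hY, .cons x e => .cons x (e.toRestrict hp.2 _ hY)

theorem Pth.map_toRestrict : ∀ {n : ℕ} {X Y : Sh 𝔞} (p : Pth (Sh 𝔞) n X Y)
    (hp : p.HomsIn 𝒮) (hX : 𝒮.objs X.1) (hY : 𝒮.objs Y.1),
    (p.toRestrict 𝒮 hp hX hY).map (sharpF (restrictProj 𝒮.incl 𝔞)) = p
  | _, _, _, .nil _, _, _, _ => rfl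
  | _, _, _, .cons f p, hp, _, hY => congrArg (Pth.cons f) (p.map_toRestrict hp.2 _ hY)

theorem Pth.toRestrict_map : ∀ {n : ℕ} {X Y : Sh (𝔞.restrict 𝒮.incl)}
    (p : Pth (Sh (𝔞.restrict 𝒮.incl)) n X Y) (hp hX hY),
    (p.map (sharpF (restrictProj 𝒮.incl 𝔞))).toRestrict 𝒮 hp hX hY = p
  | _, _, _, .nil _, _, _, _ => rfl
  | _, _, _, .cons g p, hp, _, hY => congrArg (Pth.cons g) (p.toRestrict_map hp.2 _ hY)

theorem Pth.homsIn_map : ∀ {n : ℕ} {X Y : Sh (𝔞.restrict 𝒮.incl)}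
    (p : Pth (Sh (𝔞.restrict 𝒮.incl)) n X Y),
    (p.map (sharpF (restrictProj 𝒮.incl 𝔞))).HomsIn 𝒮
  | _, _, _, .nil _ => trivial
  | _, _, _, .cons g p => ⟨(Sh.base g).2, p.homsIn_map⟩

theorem Pth.incl_map_comp_toRestrict {n : ℕ} {X Y : Sh 𝔞} (p : Pth (Sh 𝔞) n X Y)
    (hp : p.HomsIn 𝒮) (hX : 𝒮.objs X.1) (hY : 𝒮.objs Y.1) :
    𝒮.incl.map (Sh.base (p.toRestrict 𝒮 hp hX hY).comp) = Sh.base p.comp := by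
  conv_rhs => rw [← p.map_toRestrict 𝒮 hp hX hY]
  erw [Pth.comp_map]
  rfl

theorem PthElts.cons_heq {n : ℕ} {X Y Z : Sh 𝔞} {f : X ⟶ Y} {p q : Pth (Sh 𝔞) n Y Z}
    (hpq : p = q) (x : 𝔞.Hom (Sh.base f) X.2 Y.2) {e : PthElts 𝔞 p} {e' : PthElts 𝔞 q}
    (he : HEq e e') : HEq (PthElts.cons (f := f) x e) (PthElts.cons x e') := by
  subst hpq; rw [eq_of_heq he]

theorem PthElts.eltsMap_toRestrict_heq : ∀ {n : ℕ} {X Y : Sh 𝔞} {p : Pth (Sh 𝔞) n X Y}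
    (hp : p.HomsIn 𝒮) (hX : 𝒮.objs X.1) (hY : 𝒮.objs Y.1) (e : PthElts 𝔞 p),
    HEq (eltsMap (restrictProj 𝒮.incl 𝔞) (e.toRestrict 𝒮 hp hX hY)) e
  | _, _, _, _, _, _, _, .nil _ => HEq.rfl
  | _, _, _, _, hp, _, hY, .cons x e =>
      cons_heq (Pth.map_toRestrict 𝒮 _ hp.2 _ hY) x (e.eltsMap_toRestrict_heq hp.2 _ hY)

theorem PthElts.toRestrict_eltsMap_heq : ∀ {n : ℕ} {X Y : Sh (𝔞.restrict 𝒮.incl)}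
    {p : Pth (Sh (𝔞.restrict 𝒮.incl)) n X Y} (e : PthElts (𝔞.restrict 𝒮.incl) p) (hp hX hY),
    HEq ((eltsMap (restrictProj 𝒮.incl 𝔞) e).toRestrict 𝒮 hp hX hY) e
  | _, _, _, _, .nil _, _, _, _ => HEq.rfl
  | _, _, _, _, .cons x e, hp, _, hY =>
      cons_heq (Pth.toRestrict_map 𝒮 _ hp.2 _ hY) x (e.toRestrict_eltsMap_heq hp.2 _ hY)

theorem RawCochain.congr_heq {M : Bimod k 𝔞} {n : ℕ} (c : RawCochain M n) {X Y : Sh 𝔞}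
    {p q : Pth (Sh 𝔞) n X Y} (hpq : p = q) {e : PthElts 𝔞 p} {e' : PthElts 𝔞 q}
    (he : HEq e e') : HEq (c X Y p e) (c X Y q e') := by
  subst hpq; rw [eq_of_heq he]

variable (M : Bimod k 𝔞) {n : ℕ}

theorem apply_eq_cst_Fstar (c : RawCochain M n) {X Y : Sh 𝔞} (p : Pth (Sh 𝔞) n X Y)
    (hp : p.HomsIn 𝒮) (hX : 𝒮.objs X.1) (hY : 𝒮.objs Y.1) (e : PthElts 𝔞 p) :
    c X Y p e = M.cst (p.incl_map_comp_toRestrict 𝒮 hp hX hY)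
      (Fstar (restrictProj 𝒮.incl 𝔞) M c _ _ (p.toRestrict 𝒮 hp hX hY)
        (e.toRestrict 𝒮 hp hX hY)) :=
  eq_of_heq <| (c.congr_heq (p.map_toRestrict 𝒮 hp hX hY)
    (e.eltsMap_toRestrict_heq 𝒮 hp hX hY)).symm.trans <|
      (M.cst_heq _ _).symm.trans (M.cst_heq _ _).symm

theorem Fstar_zero : Fstar (restrictProj 𝒮.incl 𝔞) M (0 : RawCochain M n) = 0 :=
  funext fun _ => funext fun _ => funext fun _ => funext fun _ => M.cst_zero _

end Restriction

section ExtensionByZero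

variable (𝒮 : Subcat 𝒰) (M : Bimod k 𝔞)

open Classical in
noncomputable def extByZero {n : ℕ}
    (c' : RawCochain (Bimod.pullback (restrictProj 𝒮.incl 𝔞) M) n) : RawCochain M n :=
  fun X Y p e =>
    if h : p.HomsIn 𝒮 ∧ 𝒮.objs X.1 ∧ 𝒮.objs Y.1 then
      M.cst (p.incl_map_comp_toRestrict 𝒮 h.1 h.2.1 h.2.2)
        (c' _ _ (p.toRestrict 𝒮 h.1 h.2.1 h.2.2) (e.toRestrict 𝒮 h.1 h.2.1 h.2.2))
    else 0

/-- The relative (partially evaluated) form of `d = extByZero 𝒮 M c'`, which is what the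
recursion in `IsML` sees. -/
def ExtendsByZero {m : ℕ} {W' : 𝒮.Cat} {B : 𝔞.Obj W'.1} {Y' : Sh (𝔞.restrict 𝒮.incl)}
    {v' : W' ⟶ Y'.1}
    (c' : ∀ (Z' : Sh (𝔞.restrict 𝒮.incl)) (q : Pth (Sh (𝔞.restrict 𝒮.incl)) m Y' Z'),
      PthElts (𝔞.restrict 𝒮.incl) q →
        (Bimod.pullback (restrictProj 𝒮.incl 𝔞) M).M (v' ≫ Sh.base q.comp) B Z'.2)
    (d : ∀ (Z : Sh 𝔞) (q : Pth (Sh 𝔞) m ((sharpF (restrictProj 𝒮.incl 𝔞)).obj Y') Z),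
      PthElts 𝔞 q → M.M (𝒮.incl.map v' ≫ Sh.base q.comp) B Z.2) : Prop :=
  (∀ Z q e (hq : q.HomsIn 𝒮) (hZ : 𝒮.objs Z.1),
    HEq (d Z q e) (c' _ (q.toRestrict 𝒮 hq Y'.1.2 hZ) (e.toRestrict 𝒮 hq Y'.1.2 hZ))) ∧
  ∀ Z q e, ¬ (q.HomsIn 𝒮 ∧ 𝒮.objs Z.1) → d Z q e = 0

variable {𝒮 M} {n : ℕ}

theorem extByZero_heq (c' : RawCochain (Bimod.pullback (restrictProj 𝒮.incl 𝔞) M) n)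
    {X Y : Sh 𝔞} {p : Pth (Sh 𝔞) n X Y} (e : PthElts 𝔞 p) (hp : p.HomsIn 𝒮)
    (hX : 𝒮.objs X.1) (hY : 𝒮.objs Y.1) :
    HEq (extByZero 𝒮 M c' X Y p e)
      (c' _ _ (p.toRestrict 𝒮 hp hX hY) (e.toRestrict 𝒮 hp hX hY)) := by
  have h : extByZero 𝒮 M c' X Y p e = M.cst (p.incl_map_comp_toRestrict 𝒮 hp hX hY)
      (c' _ _ (p.toRestrict 𝒮 hp hX hY) (e.toRestrict 𝒮 hp hX hY)) :=
    dif_pos ⟨hp, hX, hY⟩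
  exact h ▸ M.cst_heq _ _

theorem extByZero_of_not (c' : RawCochain (Bimod.pullback (restrictProj 𝒮.incl 𝔞) M) n)
    {X Y : Sh 𝔞} {p : Pth (Sh 𝔞) n X Y} (e : PthElts 𝔞 p)
    (h : ¬ (p.HomsIn 𝒮 ∧ 𝒮.objs X.1 ∧ 𝒮.objs Y.1)) : extByZero 𝒮 M c' X Y p e = 0 :=
  dif_neg h

theorem Fstar_extByZero (c' : RawCochain (Bimod.pullback (restrictProj 𝒮.incl 𝔞) M) n) :
    Fstar (restrictProj 𝒮.incl 𝔞) M (extByZero 𝒮 M c') = c' := by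
  funext X Y p e
  refine eq_of_heq ((M.cst_heq _ _).trans ?_)
  refine (extByZero_heq c' _ (p.homsIn_map 𝒮) X.1.2 Y.1.2).trans ?_
  exact c'.congr_heq (p.toRestrict_map 𝒮 _ _ _) (e.toRestrict_eltsMap_heq 𝒮 _ _ _)

theorem isML_of_extendsByZero : ∀ {m : ℕ} {W' : 𝒮.Cat} {B : 𝔞.Obj W'.1}
    {Y' : Sh (𝔞.restrict 𝒮.incl)} {v' : W' ⟶ Y'.1} {c'} {d},
    IsML (Bimod.pullback (restrictProj 𝒮.incl 𝔞) M) c' →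
      ExtendsByZero 𝒮 M (m := m) (B := B) (v' := v') c' d → IsML M d
  | 0, _, _, _, _, _, _, _, _ => trivial
  | m + 1, W', B, Y', v', c', d, ⟨hadd, hsmul, hrec⟩, ⟨hcompat, hvan⟩ => by
    have hd : ∀ Z q e (hq : q.HomsIn 𝒮) (hZ : 𝒮.objs Z.1),
        d Z q e = M.cst (by erw [Functor.map_comp, q.incl_map_comp_toRestrict]; rfl)
          (c' _ (q.toRestrict 𝒮 hq Y'.1.2 hZ) (e.toRestrict 𝒮 hq Y'.1.2 hZ)) :=
      fun Z q e hq hZ => eq_of_heq ((hcompat Z q e hq hZ).trans (M.cst_heq _ _).symm)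
    refine ⟨fun Yc Zc a q e x x' => ?_, fun Yc Zc a q e r x => ?_, fun Yc a x => ?_⟩
    · by_cases h : (Pth.cons a q).HomsIn 𝒮 ∧ 𝒮.objs Zc.1
      · erw [hd _ _ _ h.1 h.2, hd _ _ _ h.1 h.2, hd _ _ _ h.1 h.2, ← M.cst_add]
        exact congrArg _ (hadd (Sh.toRestrict 𝔞 𝒮 Yc (𝒮.cod_mem _ h.1.1))
          (Sh.toRestrict 𝔞 𝒮 Zc h.2) ⟨Sh.base a, h.1.1⟩ _ _ x x')
      · erw [hvan _ _ _ h, hvan _ _ _ h, hvan _ _ _ h, add_zero]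
    · by_cases h : (Pth.cons a q).HomsIn 𝒮 ∧ 𝒮.objs Zc.1
      · erw [hd _ _ _ h.1 h.2, hd _ _ _ h.1 h.2, ← M.cst_smul]
        exact congrArg _ (hsmul (Sh.toRestrict 𝔞 𝒮 Yc (𝒮.cod_mem _ h.1.1))
          (Sh.toRestrict 𝔞 𝒮 Zc h.2) ⟨Sh.base a, h.1.1⟩ _ _ r x)
      · erw [hvan _ _ _ h, hvan _ _ _ h]
        exact (smul_zero (A := M.M _ B Zc.2) r).symm
    · by_cases ha : 𝒮.homs (Sh.base a)
      · let Yc' := Sh.toRestrict 𝔞 𝒮 Yc (𝒮.cod_mem _ ha)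
        refine isML_of_extendsByZero (Y' := Yc') (v' := v' ≫ ⟨Sh.base a, ha⟩)
          (hrec Yc' ⟨Sh.base a, ha⟩ x) ⟨fun Z q e hq hZ => ?_, fun Z q e hq => ?_⟩
        · refine (M.cst_heq _ _).trans ?_
          refine (hcompat Z (.cons a q) (.cons x e) ⟨ha, hq⟩ hZ).trans ?_
          exact ((Bimod.pullback (restrictProj 𝒮.incl 𝔞) M).cst_heq _ _).symm
        · exact (M.cst_eq_zero_iff _).2 (hvan Z (.cons a q) _ fun h => hq ⟨h.1.2, h.2⟩)
      · refine (iff_of_eq (congrArg (IsML M) ?_)).2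
          (isML_zero M m (B := B) (v := 𝒮.incl.map v' ≫ Sh.base a))
        funext Z q e
        exact (M.cst_eq_zero_iff _).2 (hvan Z (.cons a q) (.cons x e) fun h => ha h.1.1)

theorem isCochain_extByZero {c' : RawCochain (Bimod.pullback (restrictProj 𝒮.incl 𝔞) M) n}
    (hc' : IsCochain (Bimod.pullback (restrictProj 𝒮.incl 𝔞) M) c') :
    IsCochain M (extByZero 𝒮 M c') := by
  intro X
  by_cases hX : 𝒮.objs X.1
  · refine isML_of_extendsByZero (Y' := Sh.toRestrict 𝔞 𝒮 X hX) (v' := 𝟙 _)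
      (hc' (Sh.toRestrict 𝔞 𝒮 X hX)) ⟨fun Z q e hq hZ => ?_, fun Z q e hq => ?_⟩
    · refine (M.cst_heq _ _).trans ((extByZero_heq c' e hq hX hZ).trans ?_)
      exact ((Bimod.pullback (restrictProj 𝒮.incl 𝔞) M).cst_heq _ _).symm
    · exact (M.cst_eq_zero_iff _).2 (extByZero_of_not c' (X := X) e fun h => hq ⟨h.1, h.2.2⟩)
  · refine (iff_of_eq (congrArg (IsML M) ?_)).2 (isML_zero M n (v := 𝟙 X.1))
    funext Z q e
    exact (M.cst_eq_zero_iff _).2 (extByZero_of_not c' e fun h => hX h.2.1)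

end ExtensionByZero

section Decomposition

def Subcat.IsComplOf (𝒮 : Subcat 𝒰) (Z : CatIdeal 𝒰) : Prop :=
  ∀ {X Y : 𝒰} (f : X ⟶ Y), 𝒮.homs f ↔ ¬ Z.mem f

variable {𝒮 : Subcat 𝒰} {Z : CatIdeal 𝒰} {M : Bimod k 𝔞} {n : ℕ}

/-- Since `Z` is an ideal, every factor of a morphism outside `Z` lies outside `Z`. -/
theorem Pth.homsIn_of_not_mem (h𝒮 : 𝒮.IsComplOf Z) : ∀ {n : ℕ} {X Y : Sh 𝔞}
    (p : Pth (Sh 𝔞) n X Y), ¬ Z.mem (Sh.base p.comp) →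
      p.HomsIn 𝒮 ∧ 𝒮.objs X.1 ∧ 𝒮.objs Y.1
  | _, X, _, .nil _, h =>
    have hid : 𝒮.homs (𝟙 X.1) := (h𝒮 _).2 h
    ⟨trivial, 𝒮.dom_mem _ hid, 𝒮.dom_mem _ hid⟩
  | _, _, _, .cons f p, h =>
    have hf : 𝒮.homs (Sh.base f) := (h𝒮 _).2 fun hf => h (Z.comp_right _ _ hf)
    have hp := p.homsIn_of_not_mem h𝒮 fun hp => h (Z.comp_left _ _ hp)
    ⟨⟨hf, hp.1⟩, 𝒮.dom_mem _ hf, hp.2.2⟩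

theorem Pth.not_mem_comp_map (h𝒮 : 𝒮.IsComplOf Z) {X Y : Sh (𝔞.restrict 𝒮.incl)}
    (p : Pth (Sh (𝔞.restrict 𝒮.incl)) n X Y) :
    ¬ Z.mem (Sh.base (p.map (sharpF (restrictProj 𝒮.incl 𝔞))).comp) := by
  rw [Pth.comp_map]
  exact (h𝒮 _).1 (Sh.base p.comp).2

theorem apply_eq_of_Fstar_eq (h𝒮 : 𝒮.IsComplOf Z) {c₁ c₂ : RawCochain M n}
    (h : Fstar (restrictProj 𝒮.incl 𝔞) M c₁ = Fstar (restrictProj 𝒮.incl 𝔞) M c₂)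
    {X Y : Sh 𝔞} (p : Pth (Sh 𝔞) n X Y) (hZ : ¬ Z.mem (Sh.base p.comp)) (e : PthElts 𝔞 p) :
    c₁ X Y p e = c₂ X Y p e := by
  obtain ⟨hp, hX, hY⟩ := p.homsIn_of_not_mem h𝒮 hZ
  rw [apply_eq_cst_Fstar 𝒮 M c₁ p hp hX hY, apply_eq_cst_Fstar 𝒮 M c₂ p hp hX hY, h]

theorem Fstar_subInto (h𝒮 : 𝒮.IsComplOf Z) (d : RawCochain (M.subBimod Z) n) :
    Fstar (restrictProj 𝒮.incl 𝔞) M (subInto M Z d) = 0 := by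
  funext X Y p e
  exact (M.cst_eq_zero_iff _).2 <| (Submodule.eq_bot_iff _).1
    (M.zSub_eq_bot Z (p.not_mem_comp_map h𝒮)) _ (d _ _ _ (eltsMap _ e)).2

theorem mem_zSub_of_Fstar_eq_zero (h𝒮 : 𝒮.IsComplOf Z) {c : RawCochain M n}
    (hc : Fstar (restrictProj 𝒮.incl 𝔞) M c = 0) (X Y : Sh 𝔞) (p : Pth (Sh 𝔞) n X Y)
    (e : PthElts 𝔞 p) : c X Y p e ∈ M.zSub Z (Sh.base p.comp) X.2 Y.2 := by
  by_cases hZ : Z.mem (Sh.base p.comp)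
  · simp [M.zSub_eq_top Z hZ]
  · rw [apply_eq_of_Fstar_eq h𝒮 (hc.trans (Fstar_zero 𝒮 M).symm) p hZ e]
    exact Submodule.zero_mem _

/-- The lift along `quotSection` does not matter, because `φ*` only evaluates over `𝒱`,
where `M_𝒱 = M`. -/
noncomputable def theta (𝒮 : Subcat 𝒰) (M : Bimod k 𝔞) (Z : CatIdeal 𝒰)
    (c : RawCochain (M.quotBimod Z) n) :
    RawCochain (Bimod.pullback (restrictProj 𝒮.incl 𝔞) M) n :=
  Fstar (restrictProj 𝒮.incl 𝔞) M (mapRaw (M.quotSection Z) c)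

theorem theta_quotOnto (h𝒮 : 𝒮.IsComplOf Z) (c : RawCochain M n) :
    theta 𝒮 M Z (quotOnto M Z c) = Fstar (restrictProj 𝒮.incl 𝔞) M c := by
  funext X Y p e
  exact congrArg _ (M.quotSection_quotπ Z (p.not_mem_comp_map h𝒮) _)

theorem theta_injective (h𝒮 : 𝒮.IsComplOf Z) : Function.Injective (theta 𝒮 M Z (n := n)) := by
  intro c₁ c₂ h
  funext X Y p e
  by_cases hZ : Z.mem (Sh.base p.comp)
  · have := M.subsingleton_quot Z hZ (B := X.2) (A := Y.2)
    exact Subsingleton.elim _ _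
  · rw [← M.quotπ_quotSection Z (c₁ X Y p e), ← M.quotπ_quotSection Z (c₂ X Y p e)]
    exact congrArg _ (apply_eq_of_Fstar_eq h𝒮 h p hZ e)

end Decomposition

/-- Let `(𝒵, 𝒱)` be an ideal-subcategory decomposition of `𝒰`, `𝔞` a `𝒰`-graded
category, `𝔟 = 𝔞^φ` for the inclusion `φ : 𝒱 ⊆ 𝒰`, and `M` an `𝔞`-bimodule; let
`M_𝒵 ⊆ M` be the sub-bimodule with values `M_u` for `u ∈ 𝒵` and `0` otherwise (a
sub-bimodule because `𝒵` is an ideal), and `M_𝒱 = M / M_𝒵`.  Then the restriction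
`φ* : C_𝒰(𝔞, M) → C_𝒱(𝔟, M^φ)` is surjective, and the short exact sequence of
complexes `0 → C_𝒰(𝔞, M_𝒵) → C_𝒰(𝔞, M) → C_𝒰(𝔞, M_𝒱) → 0` induced by
`0 → M_𝒵 → M → M_𝒱 → 0` is canonically isomorphic to the sequence
`0 → ker(φ*) → C_𝒰(𝔞, M) → C_𝒱(𝔟, M^φ) → 0`.  In particular
`C_𝒰(𝔞, M_𝒵) ≅ C_{𝒰∖𝒱}(𝔞, M) := ker(φ*)` and `C_𝒰(𝔞, M_𝒱) ≅ C_𝒱(𝔟, M^φ)`. -/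
theorem statement16 {k : Type u} [CommRing k] {𝒰 : Type u} [Category.{u} 𝒰]
    (𝔞 : GradedCat k 𝒰) (Z : CatIdeal 𝒰) (𝒮 : Subcat 𝒰)
    (hdec : ∀ {X Y : 𝒰} (f : X ⟶ Y), (𝒮.homs f ∨ Z.mem f) ∧ ¬ (𝒮.homs f ∧ Z.mem f))
    (M : Bimod k 𝔞) (n : ℕ) :
    -- surjectivity of `φ* : Cⁿ_𝒰(𝔞, M) → Cⁿ_𝒱(𝔟, M^φ)`
    (∀ c' : RawCochain (Bimod.pullback (restrictProj 𝒮.incl 𝔞) M) n,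
      IsCochain (Bimod.pullback (restrictProj 𝒮.incl 𝔞) M) c' →
      ∃ c : RawCochain M n, IsCochain M c ∧ Fstar (restrictProj 𝒮.incl 𝔞) M c = c') ∧
    -- `ν : C_𝒰(𝔞, M_𝒵) → C_𝒰(𝔞, M)` is an injective chain map whose image consists of
    -- the Hochschild cochains killed by `φ*`, i.e. `C_𝒰(𝔞, M_𝒵) ≅ ker (φ*)`
    (∀ c c' : RawCochain (M.subBimod Z) n, IsCochain (M.subBimod Z) c →
      IsCochain (M.subBimod Z) c' → subInto M Z c = subInto M Z c' → c = c') ∧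
    (∀ d : RawCochain (M.subBimod Z) n, IsCochain (M.subBimod Z) d →
      IsCochain M (subInto M Z d) ∧
        Fstar (restrictProj 𝒮.incl 𝔞) M (subInto M Z d) = 0) ∧
    (∀ c : RawCochain M n, IsCochain M c →
      Fstar (restrictProj 𝒮.incl 𝔞) M c = 0 →
      ∃ d : RawCochain (M.subBimod Z) n, IsCochain (M.subBimod Z) d ∧
        subInto M Z d = c) ∧
    (∀ d : RawCochain (M.subBimod Z) n,
      subInto M Z (dRaw (M.subBimod Z) d) = dRaw M (subInto M Z d)) ∧
    -- `π : C_𝒰(𝔞, M) → C_𝒰(𝔞, M_𝒱)` is a surjective chain map with kernel the image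
    -- of `ν`
    (∀ c : RawCochain M n, IsCochain M c → IsCochain (M.quotBimod Z) (quotOnto M Z c)) ∧
    (∀ c' : RawCochain (M.quotBimod Z) n, IsCochain (M.quotBimod Z) c' →
      ∃ c : RawCochain M n, IsCochain M c ∧ quotOnto M Z c = c') ∧
    (∀ c : RawCochain M n, IsCochain M c →
      (quotOnto M Z c = 0 ↔
        ∃ d : RawCochain (M.subBimod Z) n, IsCochain (M.subBimod Z) d ∧
          subInto M Z d = c)) ∧
    (∀ c : RawCochain M n,
      quotOnto M Z (dRaw M c) = dRaw (M.quotBimod Z) (quotOnto M Z c)) ∧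
    -- the canonical isomorphism `C_𝒰(𝔞, M_𝒱) ≅ C_𝒱(𝔟, M^φ)`, compatible with the
    -- projections from `C_𝒰(𝔞, M)`
    (∃ θ : RawCochain (M.quotBimod Z) n →
        RawCochain (Bimod.pullback (restrictProj 𝒮.incl 𝔞) M) n,
      (∀ c : RawCochain M n, θ (quotOnto M Z c) = Fstar (restrictProj 𝒮.incl 𝔞) M c) ∧
      (∀ c c' : RawCochain (M.quotBimod Z) n, IsCochain (M.quotBimod Z) c →
        IsCochain (M.quotBimod Z) c' → θ c = θ c' → c = c') ∧
      (∀ c' : RawCochain (Bimod.pullback (restrictProj 𝒮.incl 𝔞) M) n,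
        IsCochain (Bimod.pullback (restrictProj 𝒮.incl 𝔞) M) c' →
        ∃ c : RawCochain (M.quotBimod Z) n, IsCochain (M.quotBimod Z) c ∧ θ c = c')) := by
  have h𝒮 : 𝒮.IsComplOf Z := fun f =>
    ⟨fun hS hZ => (hdec f).2 ⟨hS, hZ⟩, (hdec f).1.resolve_right⟩
  refine ⟨fun c' hc' => ⟨extByZero 𝒮 M c', isCochain_extByZero hc', Fstar_extByZero c'⟩,
    fun c c' _ _ h => subInto_injective M Z h,
    fun d hd => ⟨hd.subInto, Fstar_subInto h𝒮 d⟩,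
    fun c hc hF => (exists_subInto_eq_iff hc).2 (mem_zSub_of_Fstar_eq_zero h𝒮 hF),
    subInto_dRaw M Z,
    fun c hc => hc.quotOnto,
    fun c' hc' => ⟨mapRaw (M.quotSection Z) c', hc'.map _, quotOnto_mapRaw_quotSection c'⟩,
    fun c hc => quotOnto_eq_zero_iff.trans (exists_subInto_eq_iff hc).symm,
    quotOnto_dRaw M Z,
    theta 𝒮 M Z, theta_quotOnto h𝒮, fun c c' _ _ h => theta_injective h𝒮 h,
    fun c' hc' => ⟨quotOnto M Z (extByZero 𝒮 M c'), (isCochain_extByZero hc').quotOnto, ?_⟩⟩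
  rw [theta_quotOnto h𝒮, Fstar_extByZero]

end MapGr
end
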